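/- arXiv:2406.00588 — 11 statements merged into one kernel-verified Lean document; each statement's English description precedes it below -/
import Mathlib

section
/- For every natural number m ≥ 1, all vectors a, b ∈ ℝ^m, and every index i ∈ Fin m, the softmax function satisfies |softmax(a)_i − softmax(b)_i| ≤ √m · ‖a − b‖₂, where ‖a − b‖₂ = √(∑_{j} (a_j − b_j)²) is the Euclidean norm. -/
open scoped BigOperators

/-- The softmax function on `ℝ^m`: `softmax(a)_i = exp(a_i) / ∑_j exp(a_j)`. -/
noncomputable def softmax {m : ℕ} (a : EuclideanSpace ℝ (Fin m)) (i : Fin m) : ℝ :=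
  Real.exp (a i) / ∑ j, Real.exp (a j)

/-!
Write `p = softmax (a + t • v)` along the segment from `a` to `b = a + v`. The derivative of
`t ↦ p i` is `p i * (v i - ∑ j, p j * v j)`. As `p` is a probability vector,
`v i - ∑ j, p j * v j = ∑_{j ≠ i} p j * (v i - v j)` has size at most `2 (1 - p i) ‖v‖`,
so the derivative is at most `2 p i (1 - p i) ‖v‖ ≤ ‖v‖ / 2`, and the mean value inequality
makes each coordinate of softmax `1/2`-Lipschitz.
-/

open Finset

lemma abs_sub_sum_mul_le {ι : Type*} [Fintype ι] [DecidableEq ι] {p v : ι → ℝ} {M : ℝ}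
    (hp : ∀ j, 0 ≤ p j) (hp1 : ∑ j, p j = 1) (hv : ∀ j, |v j| ≤ M) (i : ι) :
    |v i - ∑ j, p j * v j| ≤ 2 * (1 - p i) * M := by
  have hmean : v i - ∑ j, p j * v j = ∑ j ∈ univ.erase i, p j * (v i - v j) := by
    rw [sum_erase _ (by simp)]
    simp only [mul_sub, sum_sub_distrib, ← sum_mul, hp1, one_mul]
  have hrest : ∑ j ∈ univ.erase i, p j = 1 - p i := by
    rw [← hp1, ← add_sum_erase _ _ (mem_univ i), add_sub_cancel_left]
  calc |v i - ∑ j, p j * v j| ≤ ∑ j ∈ univ.erase i, p j * |v i - v j| := by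
        rw [hmean]
        refine (abs_sum_le_sum_abs _ _).trans_eq (sum_congr rfl fun j _ => ?_)
        rw [abs_mul, abs_of_nonneg (hp j)]
    _ ≤ ∑ j ∈ univ.erase i, p j * (2 * M) := by
        gcongr with j
        · exact hp j
        · linarith [abs_sub (v i) (v j), hv i, hv j]
    _ = 2 * (1 - p i) * M := by rw [← sum_mul, hrest]; ring

section

variable {m : ℕ}

lemma sum_exp_apply_pos [NeZero m] (a : EuclideanSpace ℝ (Fin m)) :
    0 < ∑ j, Real.exp (a j) :=
  sum_pos (fun _ _ => Real.exp_pos _) univ_nonempty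

lemma softmax_nonneg (a : EuclideanSpace ℝ (Fin m)) (i : Fin m) : 0 ≤ softmax a i :=
  div_nonneg (Real.exp_pos _).le (sum_nonneg fun _ _ => (Real.exp_pos _).le)

lemma sum_softmax [NeZero m] (a : EuclideanSpace ℝ (Fin m)) : ∑ j, softmax a j = 1 := by
  simp only [softmax, ← sum_div, div_self (sum_exp_apply_pos a).ne']

lemma hasDerivAt_softmax_add_smul [NeZero m] (a v : EuclideanSpace ℝ (Fin m)) (i : Fin m)
    (t : ℝ) :
    HasDerivAt (fun t : ℝ => softmax (a + t • v) i)
      (softmax (a + t • v) i * (v i - ∑ j, softmax (a + t • v) j * v j)) t := by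
  have hexp : ∀ j, HasDerivAt (fun t : ℝ => Real.exp ((a + t • v) j))
      (Real.exp ((a + t • v) j) * v j) t := fun j => by
    simpa using (((hasDerivAt_id t).mul_const (v j)).const_add (a j)).exp
  refine ((hexp i).div (HasDerivAt.fun_sum fun j _ => hexp j)
    (sum_exp_apply_pos (a + t • v)).ne').congr_deriv ?_
  have hne := (sum_exp_apply_pos (a + t • v)).ne'
  simp only [softmax, ← sum_div, div_mul_eq_mul_div]
  field_simp

lemma abs_softmax_mul_sub_sum_le [NeZero m] (a v : EuclideanSpace ℝ (Fin m)) (i : Fin m) :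
    |softmax a i * (v i - ∑ j, softmax a j * v j)| ≤ ‖v‖ / 2 := by
  have hp := softmax_nonneg a i
  have hv : ∀ j, |v j| ≤ ‖v‖ := fun j => by simpa using PiLp.norm_apply_le v j
  calc |softmax a i * (v i - ∑ j, softmax a j * v j)|
      ≤ softmax a i * (2 * (1 - softmax a i) * ‖v‖) := by
        rw [abs_mul, abs_of_nonneg hp]
        gcongr
        exact abs_sub_sum_mul_le (softmax_nonneg a) (sum_softmax a) hv i
    _ ≤ ‖v‖ / 2 := by nlinarith [mul_nonneg (norm_nonneg v) (sq_nonneg (2 * softmax a i - 1))]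

lemma lipschitzWith_softmax_apply [NeZero m] (i : Fin m) :
    LipschitzWith 2⁻¹ (fun a : EuclideanSpace ℝ (Fin m) => softmax a i) := by
  refine LipschitzWith.of_dist_le_mul fun b a => ?_
  have hderiv : ∀ t ∈ Set.Icc (0 : ℝ) 1,
      HasDerivWithinAt (fun t : ℝ => softmax (a + t • (b - a)) i) _ (Set.Icc 0 1) t :=
    fun t _ => (hasDerivAt_softmax_add_smul a (b - a) i t).hasDerivWithinAt
  have hmvt := norm_image_sub_le_of_norm_deriv_le_segment_01' hderiv
    fun t _ => abs_softmax_mul_sub_sum_le (a + t • (b - a)) (b - a) i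
  simpa [Real.dist_eq, dist_eq_norm, div_eq_inv_mul] using hmvt

end

theorem softmax_lipschitz_general {m : ℕ}
    (a b : EuclideanSpace ℝ (Fin m)) (i : Fin m) :
    |softmax a i - softmax b i| ≤ Real.sqrt m * ‖a - b‖ := by
  have : NeZero m := ⟨i.pos.ne'⟩
  have hm : (2⁻¹ : ℝ) ≤ Real.sqrt m :=
    calc (2⁻¹ : ℝ) ≤ 1 := by norm_num
      _ ≤ Real.sqrt m := Real.one_le_sqrt.mpr (by exact_mod_cast i.pos)
  calc |softmax a i - softmax b i| ≤ 2⁻¹ * ‖a - b‖ := by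
        simpa [Real.dist_eq, dist_eq_norm] using (lipschitzWith_softmax_apply i).dist_le_mul a b
    _ ≤ Real.sqrt m * ‖a - b‖ := by gcongr

/-- The softmax function is `√m`-Lipschitz in each coordinate with respect to the
Euclidean (ℓ²) norm. -/
theorem softmax_lipschitz {m : ℕ} (hm : 1 ≤ m)
    (a b : EuclideanSpace ℝ (Fin m)) (i : Fin m) :
    |softmax a i - softmax b i| ≤ Real.sqrt m * ‖a - b‖ :=
  softmax_lipschitz_general a b i
end

section
/- Let X be a measurable space, m ≥ 1, and μ a probability measure on X × Fin m; write y for the second (label) coordinate. Fix l_p ∈ Fin m and set η := μ{(x,y) : y = l_p}; assume 0 < η < 1. Let μ₁ := μ[·|{y = l_p}] and μ₀ := μ[·|{y ≠ l_p}] be the conditional probability measures. Let T₁, T₂ : X → X be measurable maps, let h, f : X × Fin m → ℝ be measurable with values in [0,1], and define c(z) := h(z, l_p) − f(z, l_p) for z ∈ X. Let ε, τ, Q ≥ 0 and λ ≥ 1 be reals. Assume: (i) ∫ f(T₂ x, y) dμ₁(x,y) ≥ 1 − ε; (ii) for every measurable A ⊆ X, μ₀{(x,y) : T₁ x ∈ A}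 ≤ λ · μ₁{(x,y) : T₁ x ∈ A}; (iii) ∫ |c(T₁ x) − c(T₂ x)| dμ(x,y) ≤ τ; (iv) ∫ h(T₂ x, l_p) dμ₁(x,y) ≤ Q. Then ∫ h(T₂ x, l_p) dμ(x,y) ≤ λ·(Q + τ/η + ε) + τ + (λ − 1)·η. -/
/-! Split `μ` into its target-class part `μ₁` and its non-target part `μ₀`. On `μ₁` the loss is
at most `Q` by (iv). On `μ₀`, since `f ≤ 1`, the loss `h (T₂ x, l_p)` is at most `c (T₂ x) + 1`,
which by (iii) is close to `c (T₁ x) + 1`. The latter is a nonnegative function of the trigger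
`T₁ x`, so by (ii) its `μ₀`-mean is at most `λ` times its `μ₁`-mean, and by (iii), (i) and (iv)
that `μ₁`-mean is at most `Q + ε + τ / η`. -/

open MeasureTheory ProbabilityTheory

namespace MeasureTheory

variable {α β : Type*} [MeasurableSpace α] [MeasurableSpace β]

lemma setIntegral_eq_measureReal_mul_integral_cond {μ : Measure α} [IsFiniteMeasure μ]
    {s : Set α} (f : α → ℝ) :
    ∫ x in s, f x ∂μ = μ.real s * ∫ x, f x ∂μ[|s] := by
  rcases eq_or_ne (μ s) 0 with hs | hs
  · simp [setIntegral_measure_zero f hs, measureReal_def, hs]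
  · rw [ProbabilityTheory.cond, integral_smul_measure, smul_eq_mul, ← mul_assoc, measureReal_def,
      ENNReal.toReal_inv, mul_inv_cancel₀ (ENNReal.toReal_ne_zero.2 ⟨hs, measure_ne_top μ s⟩),
      one_mul]

lemma integral_eq_measureReal_mul_integral_cond_add {μ : Measure α} [IsFiniteMeasure μ]
    {s : Set α} (hs : MeasurableSet s) {f : α → ℝ} (hf : Integrable f μ) :
    ∫ x, f x ∂μ = μ.real s * ∫ x, f x ∂μ[|s] + μ.real sᶜ * ∫ x, f x ∂μ[|sᶜ] := by
  rw [← setIntegral_eq_measureReal_mul_integral_cond,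
    ← setIntegral_eq_measureReal_mul_integral_cond, integral_add_compl hs hf]

lemma integral_le_integral_add_integral_abs_sub {μ : Measure α} {f g : α → ℝ}
    (hf : Integrable f μ) (hg : Integrable g μ) :
    ∫ x, f x ∂μ ≤ ∫ x, g x ∂μ + ∫ x, |f x - g x| ∂μ := by
  have hfg : Integrable (fun x => |f x - g x|) μ := (hf.sub hg).abs
  rw [← integral_add hg hfg]
  exact integral_mono hf (hg.add hfg) fun x => by linarith [le_abs_self (f x - g x)]

lemma map_le_smul_map_of_measureReal_preimage_le {ν₀ ν₁ : Measure α} [IsFiniteMeasure ν₀]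
    [IsFiniteMeasure ν₁] {T : α → β} (hT : Measurable T) {c : ℝ} (hc : 0 ≤ c)
    (hdom : ∀ A, MeasurableSet A → ν₀.real (T ⁻¹' A) ≤ c * ν₁.real (T ⁻¹' A)) :
    ν₀.map T ≤ ENNReal.ofReal c • ν₁.map T := by
  refine Measure.le_iff.2 fun A hA => ?_
  rw [Measure.smul_apply, Measure.map_apply hT hA, Measure.map_apply hT hA, smul_eq_mul,
    ← ofReal_measureReal, ← ofReal_measureReal, ← ENNReal.ofReal_mul hc]
  exact ENNReal.ofReal_le_ofReal (hdom A hA)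

lemma integral_comp_le_mul_integral_comp_of_measureReal_preimage_le {ν₀ ν₁ : Measure α}
    [IsFiniteMeasure ν₀] [IsFiniteMeasure ν₁] {T : α → β} (hT : Measurable T) {c : ℝ}
    (hc : 0 ≤ c) (hdom : ∀ A, MeasurableSet A → ν₀.real (T ⁻¹' A) ≤ c * ν₁.real (T ⁻¹' A))
    {g : β → ℝ} (hg : Measurable g) (hg_nonneg : 0 ≤ g) (hgi : Integrable (g ∘ T) ν₁) :
    ∫ x, g (T x) ∂ν₀ ≤ c * ∫ x, g (T x) ∂ν₁ := by
  have hgi' : Integrable g (ν₁.map T) :=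
    (integrable_map_measure hg.aestronglyMeasurable hT.aemeasurable).2 hgi
  rw [← integral_map hT.aemeasurable hg.aestronglyMeasurable,
    ← integral_map hT.aemeasurable hg.aestronglyMeasurable]
  calc ∫ y, g y ∂ν₀.map T ≤ ∫ y, g y ∂(ENNReal.ofReal c • ν₁.map T) :=
        integral_mono_measure (map_le_smul_map_of_measureReal_preimage_le hT hc hdom)
          (ae_of_all _ hg_nonneg) (hgi'.smul_measure ENNReal.ofReal_ne_top)
    _ = c * ∫ y, g y ∂ν₁.map T := by
        rw [integral_smul_measure, ENNReal.toReal_ofReal hc, smul_eq_mul]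

end MeasureTheory

section Shortcut

variable {X Y : Type*} [MeasurableSpace X] [MeasurableSpace Y] {h f : X × Y → ℝ} {l : Y}
  {T T₁ T₂ : X → X}

def shortcut (h f : X × Y → ℝ) (l : Y) (z : X) : ℝ := h (z, l) - f (z, l)

lemma integrable_comp_of_mem_Icc (ν : Measure (X × Y)) [IsFiniteMeasure ν] (hT : Measurable T)
    {g : X × Y → ℝ} (hg : Measurable g) {a b : ℝ} (hab : ∀ p, g p ∈ Set.Icc a b) :
    Integrable (fun p : X × Y => g (T p.1, l)) ν :=
  .of_mem_Icc a b (by fun_prop) (ae_of_all _ fun _ => hab _)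

lemma integrable_shortcut_comp_add_one (ν : Measure (X × Y)) [IsFiniteMeasure ν]
    (hT : Measurable T) (hh : Measurable h) (hf : Measurable f)
    (hh01 : ∀ p, h p ∈ Set.Icc (0 : ℝ) 1) (hf01 : ∀ p, f p ∈ Set.Icc (0 : ℝ) 1) :
    Integrable (fun p : X × Y => shortcut h f l (T p.1) + 1) ν :=
  ((integrable_comp_of_mem_Icc ν hT hh hh01).sub
    (integrable_comp_of_mem_Icc ν hT hf hf01)).add (integrable_const 1)

lemma integral_comp_le_mul_integral_shortcut_add_integral_abs_sub (ν₀ ν₁ : Measure (X × Y))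
    [IsFiniteMeasure ν₀] [IsFiniteMeasure ν₁] (hT₁ : Measurable T₁) (hT₂ : Measurable T₂)
    (hh : Measurable h) (hf : Measurable f)
    (hh01 : ∀ p, h p ∈ Set.Icc (0 : ℝ) 1) (hf01 : ∀ p, f p ∈ Set.Icc (0 : ℝ) 1)
    {c : ℝ} (hc : 0 ≤ c)
    (hdom : ∀ A, MeasurableSet A → ν₀.real {p | T₁ p.1 ∈ A} ≤ c * ν₁.real {p | T₁ p.1 ∈ A}) :
    ∫ p, h (T₂ p.1, l) ∂ν₀ ≤ c * ∫ p, (shortcut h f l (T₁ p.1) + 1) ∂ν₁ +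
      ∫ p, |shortcut h f l (T₁ p.1) - shortcut h f l (T₂ p.1)| ∂ν₀ := by
  have hg : Measurable fun z => shortcut h f l z + 1 := by unfold shortcut; fun_prop
  have hg_nonneg : 0 ≤ fun z => shortcut h f l z + 1 := fun z => by
    simp only [Pi.zero_apply, shortcut]; linarith [(hh01 (z, l)).1, (hf01 (z, l)).2]
  calc ∫ p, h (T₂ p.1, l) ∂ν₀ ≤ ∫ p, (shortcut h f l (T₂ p.1) + 1) ∂ν₀ :=
        integral_mono (integrable_comp_of_mem_Icc ν₀ hT₂ hh hh01)
          (integrable_shortcut_comp_add_one ν₀ hT₂ hh hf hh01 hf01) fun p => by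
            simp only [shortcut]; linarith [(hf01 (T₂ p.1, l)).2]
    _ ≤ ∫ p, (shortcut h f l (T₁ p.1) + 1) ∂ν₀ +
          ∫ p, |shortcut h f l (T₁ p.1) - shortcut h f l (T₂ p.1)| ∂ν₀ := by
        have := integral_le_integral_add_integral_abs_sub
          (integrable_shortcut_comp_add_one (l := l) ν₀ hT₂ hh hf hh01 hf01)
          (integrable_shortcut_comp_add_one (l := l) ν₀ hT₁ hh hf hh01 hf01)
        simp only [add_sub_add_right_eq_sub] at this
        simpa only [abs_sub_comm] using this
    _ ≤ _ := by
        gcongr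
        exact integral_comp_le_mul_integral_comp_of_measureReal_preimage_le
          (T := fun p : X × Y => T₁ p.1) (by fun_prop) hc hdom hg hg_nonneg
          (integrable_shortcut_comp_add_one ν₁ hT₁ hh hf hh01 hf01)

lemma integral_shortcut_comp_add_one_le (ν : Measure (X × Y)) [IsProbabilityMeasure ν]
    (hT₁ : Measurable T₁) (hT₂ : Measurable T₂) (hh : Measurable h) (hf : Measurable f)
    (hh01 : ∀ p, h p ∈ Set.Icc (0 : ℝ) 1) (hf01 : ∀ p, f p ∈ Set.Icc (0 : ℝ) 1) {ε Q : ℝ}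
    (hadv : 1 - ε ≤ ∫ p, f (T₂ p.1, l) ∂ν) (hloss : ∫ p, h (T₂ p.1, l) ∂ν ≤ Q) :
    ∫ p, (shortcut h f l (T₁ p.1) + 1) ∂ν ≤
      Q + ε + ∫ p, |shortcut h f l (T₁ p.1) - shortcut h f l (T₂ p.1)| ∂ν := by
  have hH := integrable_comp_of_mem_Icc (l := l) ν hT₂ hh hh01
  have hF := integrable_comp_of_mem_Icc (l := l) ν hT₂ hf hf01
  have hsplit : ∫ p, (shortcut h f l (T₂ p.1) + 1) ∂ν =
      ∫ p, h (T₂ p.1, l) ∂ν - ∫ p, f (T₂ p.1, l) ∂ν + 1 := by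
    rw [integral_add (by exact hH.sub hF) (integrable_const 1), ← integral_sub hH hF,
      integral_const, probReal_univ, one_smul]
    rfl
  have := integral_le_integral_add_integral_abs_sub
    (integrable_shortcut_comp_add_one (l := l) ν hT₁ hh hf hh01 hf01)
    (integrable_shortcut_comp_add_one (l := l) ν hT₂ hh hf hh01 hf01)
  simp only [add_sub_add_right_eq_sub, hsplit] at this
  linarith

end Shortcut

lemma weighted_sum_le_of_conditional_bounds {η a₀ a₁ G d₀ d₁ ε τ Q lam : ℝ} (hη0 : 0 < η)
    (hη1 : η ≤ 1) (hε : 0 ≤ ε) (hQ : 0 ≤ Q) (hlam : 1 ≤ lam) (ha₁ : a₁ ≤ Q)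
    (ha₀ : a₀ ≤ lam * G + d₀) (hG : G ≤ Q + ε + d₁) (hd : η * d₁ + (1 - η) * d₀ ≤ τ)
    (hd₀ : 0 ≤ d₀) (hd₁ : 0 ≤ d₁) :
    η * a₁ + (1 - η) * a₀ ≤ lam * (Q + τ / η + ε) + τ + (lam - 1) * η := by
  set S := Q + τ / η + ε
  have hd₁S : d₁ ≤ τ / η := by rw [le_div_iff₀ hη0]; nlinarith
  have hd₀τ : (1 - η) * d₀ ≤ τ := by nlinarith
  have hQS : Q ≤ S := by linarith [hd₁.trans hd₁S]
  have ha₁S : a₁ ≤ lam * S := ha₁.trans (hQS.trans (le_mul_of_one_le_left (hQ.trans hQS) hlam))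
  have ha₀S : a₀ ≤ lam * S + d₀ := ha₀.trans (by gcongr; linarith)
  calc η * a₁ + (1 - η) * a₀ ≤ η * (lam * S) + (1 - η) * (lam * S + d₀) := by gcongr
    _ ≤ lam * S + τ + (lam - 1) * η := by nlinarith

theorem poison_generalization_core_general
    {X : Type*} [MeasurableSpace X] {m : ℕ}
    (μ : Measure (X × Fin m)) [IsProbabilityMeasure μ] (l_p : Fin m)
    (η : ℝ) (hη : η = (μ {p | p.2 = l_p}).toReal) (hη0 : 0 < η)
    (T₁ T₂ : X → X) (hT₁ : Measurable T₁) (hT₂ : Measurable T₂)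
    (h f : X × Fin m → ℝ) (hhm : Measurable h) (hfm : Measurable f)
    (hh01 : ∀ p, h p ∈ Set.Icc (0 : ℝ) 1) (hf01 : ∀ p, f p ∈ Set.Icc (0 : ℝ) 1)
    (ε τ Q lam : ℝ) (hε : 0 ≤ ε) (hQ : 0 ≤ Q) (hlam : 1 ≤ lam)
    -- (i) the trigger is adversarial for `f` on the target class
    (hyp1 : 1 - ε ≤ ∫ p, f (T₂ p.1, p.2) ∂(μ[|{p | p.2 = l_p}]))
    -- (ii) λ-domination of the trigger distribution
    (hyp2 : ∀ A : Set X, MeasurableSet A →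
      ((μ[|{p | p.2 ≠ l_p}]) {p | T₁ p.1 ∈ A}).toReal ≤
        lam * ((μ[|{p | p.2 = l_p}]) {p | T₁ p.1 ∈ A}).toReal)
    -- (iii) shortcut-similarity condition for `c(z) = h(z, l_p) − f(z, l_p)`
    (hyp3 : ∫ p, |(h (T₁ p.1, l_p) - f (T₁ p.1, l_p)) -
        (h (T₂ p.1, l_p) - f (T₂ p.1, l_p))| ∂μ ≤ τ)
    -- (iv) empirical bound on the target-class loss of `h` on triggered inputs
    (hyp4 : ∫ p, h (T₂ p.1, l_p) ∂(μ[|{p | p.2 = l_p}]) ≤ Q) :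
    ∫ p, h (T₂ p.1, l_p) ∂μ ≤ lam * (Q + τ / η + ε) + τ + (lam - 1) * η := by
  set E : Set (X × Fin m) := {p | p.2 = l_p}
  have hE : MeasurableSet E := measurable_snd (measurableSet_singleton l_p)
  have hμE : μ.real E = η := hη.symm
  have hμEc : μ.real Eᶜ = 1 - η := by rw [probReal_compl_eq_one_sub hE, hμE]
  have : IsProbabilityMeasure μ[|E] :=
    cond_isProbabilityMeasure fun h0 => by simp [hη, h0] at hη0
  have hadv : 1 - ε ≤ ∫ p, f (T₂ p.1, l_p) ∂μ[|E] :=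
    hyp1.trans_eq (integral_congr_ae ((ae_cond_mem hE).mono fun p hp =>
      congrArg (fun y => f (T₂ p.1, y)) hp))
  have hgap : η * ∫ p, |shortcut h f l_p (T₁ p.1) - shortcut h f l_p (T₂ p.1)| ∂μ[|E] +
      (1 - η) * ∫ p, |shortcut h f l_p (T₁ p.1) - shortcut h f l_p (T₂ p.1)| ∂μ[|Eᶜ] ≤ τ := by
    rw [← hμEc, ← hμE, ← integral_eq_measureReal_mul_integral_cond_add hE]
    · exact hyp3
    · simpa only [Pi.sub_apply, add_sub_add_right_eq_sub] using
        ((integrable_shortcut_comp_add_one (l := l_p) μ hT₁ hhm hfm hh01 hf01).sub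
          (integrable_shortcut_comp_add_one (l := l_p) μ hT₂ hhm hfm hh01 hf01)).abs
  rw [integral_eq_measureReal_mul_integral_cond_add hE
    (integrable_comp_of_mem_Icc μ hT₂ hhm hh01), hμE, hμEc]
  exact weighted_sum_le_of_conditional_bounds hη0 (hμE ▸ measureReal_le_one) hε hQ hlam hyp4
    (integral_comp_le_mul_integral_shortcut_add_integral_abs_sub μ[|Eᶜ] μ[|E]
      hT₁ hT₂ hhm hfm hh01 hf01 (by linarith) hyp2)
    (integral_shortcut_comp_add_one_le μ[|E] hT₁ hT₂ hhm hfm hh01 hf01 hadv hyp4) hgap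
    (integral_nonneg fun _ => abs_nonneg _) (integral_nonneg fun _ => abs_nonneg _)

/-- Deterministic core of the poison generalization error bound (Results f1–f4): given a
probability measure `μ` on `X × Fin m` with target-label probability `η ∈ (0,1)`,
conditional measures `μ₁ = μ[·|y = l_p]` and `μ₀ = μ[·|y ≠ l_p]`, trigger maps `T₁, T₂`,
and `[0,1]`-valued hypotheses `h, f`, the conditions (i)–(iv) imply
`∫ h(T₂ x, l_p) dμ ≤ λ(Q + τ/η + ε) + τ + (λ−1)η`. -/
theorem poison_generalization_core
    {X : Type*} [MeasurableSpace X] {m : ℕ} (hm : 1 ≤ m)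
    (μ : Measure (X × Fin m)) [IsProbabilityMeasure μ] (l_p : Fin m)
    (η : ℝ) (hη : η = (μ {p | p.2 = l_p}).toReal) (hη0 : 0 < η) (hη1 : η < 1)
    (T₁ T₂ : X → X) (hT₁ : Measurable T₁) (hT₂ : Measurable T₂)
    (h f : X × Fin m → ℝ) (hhm : Measurable h) (hfm : Measurable f)
    (hh01 : ∀ p, h p ∈ Set.Icc (0 : ℝ) 1) (hf01 : ∀ p, f p ∈ Set.Icc (0 : ℝ) 1)
    (ε τ Q lam : ℝ) (hε : 0 ≤ ε) (hτ : 0 ≤ τ) (hQ : 0 ≤ Q) (hlam : 1 ≤ lam)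
    -- (i) the trigger is adversarial for `f` on the target class
    (hyp1 : 1 - ε ≤ ∫ p, f (T₂ p.1, p.2) ∂(μ[|{p | p.2 = l_p}]))
    -- (ii) λ-domination of the trigger distribution
    (hyp2 : ∀ A : Set X, MeasurableSet A →
      ((μ[|{p | p.2 ≠ l_p}]) {p | T₁ p.1 ∈ A}).toReal ≤
        lam * ((μ[|{p | p.2 = l_p}]) {p | T₁ p.1 ∈ A}).toReal)
    -- (iii) shortcut-similarity condition for `c(z) = h(z, l_p) − f(z, l_p)`
    (hyp3 : ∫ p, |(h (T₁ p.1, l_p) - f (T₁ p.1, l_p)) -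
        (h (T₂ p.1, l_p) - f (T₂ p.1, l_p))| ∂μ ≤ τ)
    -- (iv) empirical bound on the target-class loss of `h` on triggered inputs
    (hyp4 : ∫ p, h (T₂ p.1, l_p) ∂(μ[|{p | p.2 = l_p}]) ≤ Q) :
    ∫ p, h (T₂ p.1, l_p) ∂μ ≤ lam * (Q + τ / η + ε) + τ + (lam - 1) * η :=
  poison_generalization_core_general μ l_p η hη hη0 T₁ T₂ hT₁ hT₂ h f hhm hfm hh01 hf01 ε τ Q lam hε
    hQ hlam hyp1 hyp2 hyp3 hyp4
end

section
/- Let n ≥ 1 and let S₀, S₁ be finite subsets of ℝⁿ such that the pair (S₀, S₁) is not linearly separable. Let P : ℝⁿ → ℝⁿ, let η₁ be a real with 0 < η₁ < 1/2, and let k ∈ ℝ satisfy ‖P x − P z‖ ≤ k for all x, z ∈ S₀. Suppose w ∈ ℝⁿ with ‖w‖ = 1 satisfies ⟨w, x + P x⟩ ≥ 1 − η₁ for every x ∈ S₀ and ⟨w, x⟩ ≤ η₁ for every x ∈ S₁. Then for every x₀ ∈ S₀, ⟨w, P x₀⟩ ≥ 1 − 2η₁ − k; consequently ⟨w, x₁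 + P x₀⟩ − ⟨w, x₁⟩ ≥ 1 − 2η₁ − k for every x₁ ∈ S₀ ∪ S₁. -/
open scoped RealInnerProductSpace

/-- A pair `(S₀, S₁)` of subsets of `ℝⁿ` is linearly separable if some affine hyperplane
strictly separates `S₀` from `S₁`. -/
def LinSeparable {n : ℕ} (S₀ S₁ : Set (EuclideanSpace ℝ (Fin n))) : Prop :=
  ∃ (v : EuclideanSpace ℝ (Fin n)) (b : ℝ),
    (∀ x ∈ S₀, b < ⟪v, x⟫) ∧ (∀ x ∈ S₁, ⟪v, x⟫ ≤ b)

/-- Unit-normal linear functions form a simple feature recognition space with constant 1: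
if `(S₀, S₁)` is finite and not linearly separable, `‖P x − P z‖ ≤ k` on `S₀`, and a unit
vector `w` satisfies `⟪w, x + P x⟫ ≥ 1 − η₁` on `S₀` and `⟪w, x⟫ ≤ η₁` on `S₁`, then
`⟪w, P x₀⟫ ≥ 1 − 2η₁ − k` for every `x₀ ∈ S₀`, and consequently
`⟪w, x₁ + P x₀⟫ − ⟪w, x₁⟫ ≥ 1 − 2η₁ − k` for all `x₁ ∈ S₀ ∪ S₁`. -/
theorem linear_simple_feature_recognition {n : ℕ} (hn : 1 ≤ n)
    (S₀ S₁ : Set (EuclideanSpace ℝ (Fin n))) (hS₀ : S₀.Finite) (hS₁ : S₁.Finite)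
    (hsep : ¬ LinSeparable S₀ S₁)
    (P : EuclideanSpace ℝ (Fin n) → EuclideanSpace ℝ (Fin n))
    (η₁ : ℝ) (hη0 : 0 < η₁) (hη2 : η₁ < 1 / 2)
    (k : ℝ) (hk : ∀ x ∈ S₀, ∀ z ∈ S₀, ‖P x - P z‖ ≤ k)
    (w : EuclideanSpace ℝ (Fin n)) (hw : ‖w‖ = 1)
    (h0 : ∀ x ∈ S₀, 1 - η₁ ≤ ⟪w, x + P x⟫)
    (h1 : ∀ x ∈ S₁, ⟪w, x⟫ ≤ η₁) :
    (∀ x₀ ∈ S₀, 1 - 2 * η₁ - k ≤ ⟪w, P x₀⟫) ∧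
    (∀ x₀ ∈ S₀, ∀ x₁ ∈ S₀ ∪ S₁, 1 - 2 * η₁ - k ≤ ⟪w, x₁ + P x₀⟫ - ⟪w, x₁⟫) := by
  have hz : ∃ z ∈ S₀, ⟪w, z⟫ ≤ η₁ := by
    by_contra h
    push_neg at h
    exact hsep ⟨w, η₁, fun x hx => h x hx, h1⟩
  obtain ⟨z, hzS, hz⟩ := hz
  have hPz : 1 - 2 * η₁ ≤ ⟪w, P z⟫ := by
    have := h0 z hzS
    rw [inner_add_right] at this
    linarith
  have main : ∀ x₀ ∈ S₀, 1 - 2 * η₁ - k ≤ ⟪w, P x₀⟫ := by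
    intro x₀ hx₀
    have hcs : |⟪w, P x₀ - P z⟫| ≤ k := by
      calc |⟪w, P x₀ - P z⟫| ≤ ‖w‖ * ‖P x₀ - P z‖ := abs_real_inner_le_norm _ _
        _ = ‖P x₀ - P z‖ := by rw [hw, one_mul]
        _ ≤ k := hk x₀ hx₀ z hzS
    have := abs_le.mp hcs
    rw [inner_sub_right] at this
    linarith [this.1]
  refine ⟨main, fun x₀ hx₀ x₁ _ => ?_⟩
  rw [inner_add_right]
  linarith [main x₀ hx₀]
end

section
/- Let n ≥ 1 and let S₀, S₁ be finite subsets of ℝⁿ such that the pair (S₀, S₁) is not linearly separable. Let P : ℝⁿ → ℝⁿ, let η₁ be a real with 0 < η₁ < 1/2, and let k ∈ ℝ satisfy 0 ≤ k ≤ 1 − 2η₁ and ‖P x − P z‖ ≤ k for all x, z ∈ S₀. Let a ∈ (0, 1] and let φ : ℝ → ℝ be differentiable with a ≤ φ′(t) ≤ 1 for all t ∈ ℝ and φ(0) = 0. Suppose w ∈ ℝⁿ with ‖w‖ = 1 satisfies φ(⟨w, x + P x⟩) ≥ 1 − η₁ for every x ∈ S₀ and φ(⟨w, x⟩) ≤ η₁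 for every x ∈ S₁. Then for every x₀ ∈ S₀ and every x₁ ∈ S₀ ∪ S₁: φ(⟨w, P x₀⟩) ≥ a·(1 − 2η₁ − k) and φ(⟨w, x₁ + P x₀⟩) − φ(⟨w, x₁⟩) ≥ a·(1 − 2η₁ − k). -/
open scoped RealInnerProductSpace

/-- The hypothesis space `{φ(⟪w, ·⟫) : ‖w‖ = 1}`, for `φ` an increasing differentiable
function with derivative in `[a, 1]` and `φ(0) = 0`, is a simple feature recognition space
with constant `a`: under margins `η₁` and trigger-similarity `k ≤ 1 − 2η₁`, one gets
`φ(⟪w, P x₀⟫) ≥ a(1 − 2η₁ − k)` and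
`φ(⟪w, x₁ + P x₀⟫) − φ(⟪w, x₁⟫) ≥ a(1 − 2η₁ − k)`. -/
theorem nonlinear_simple_feature_recognition {n : ℕ} (hn : 1 ≤ n)
    (S₀ S₁ : Set (EuclideanSpace ℝ (Fin n))) (hS₀ : S₀.Finite) (hS₁ : S₁.Finite)
    (hsep : ¬ LinSeparable S₀ S₁)
    (P : EuclideanSpace ℝ (Fin n) → EuclideanSpace ℝ (Fin n))
    (η₁ : ℝ) (hη0 : 0 < η₁) (hη2 : η₁ < 1 / 2)
    (k : ℝ) (hk0 : 0 ≤ k) (hk1 : k ≤ 1 - 2 * η₁)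
    (hk : ∀ x ∈ S₀, ∀ z ∈ S₀, ‖P x - P z‖ ≤ k)
    (a : ℝ) (ha0 : 0 < a) (ha1 : a ≤ 1)
    (φ : ℝ → ℝ) (hφdiff : Differentiable ℝ φ)
    (hφderiv : ∀ t : ℝ, a ≤ deriv φ t ∧ deriv φ t ≤ 1) (hφ0 : φ 0 = 0)
    (w : EuclideanSpace ℝ (Fin n)) (hw : ‖w‖ = 1)
    (h0 : ∀ x ∈ S₀, 1 - η₁ ≤ φ ⟪w, x + P x⟫)
    (h1 : ∀ x ∈ S₁, φ ⟪w, x⟫ ≤ η₁) :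
    ∀ x₀ ∈ S₀, ∀ x₁ ∈ S₀ ∪ S₁,
      a * (1 - 2 * η₁ - k) ≤ φ ⟪w, P x₀⟫ ∧
      a * (1 - 2 * η₁ - k) ≤ φ ⟪w, x₁ + P x₀⟫ - φ ⟪w, x₁⟫ := by
  -- Basic slope bounds for φ.
  have hlow : ∀ s t : ℝ, s ≤ t → a * (t - s) ≤ φ t - φ s := fun s t hst =>
    mul_sub_le_image_sub_of_le_deriv hφdiff (fun x => (hφderiv x).1) hst
  have hup : ∀ s t : ℝ, s ≤ t → φ t - φ s ≤ t - s := by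
    intro s t hst
    have := image_sub_le_mul_sub_of_deriv_le hφdiff (fun x => (hφderiv x).2) hst
    linarith
  have hmono : Monotone φ := by
    intro s t hst
    have := hlow s t hst
    nlinarith
  intro x₀ hx₀ x₁ hx₁
  -- S₁ is nonempty, else (S₀, S₁) would be separable.
  have hS₁ne : S₁.Nonempty := by
    by_contra hne
    rw [Set.not_nonempty_iff_eq_empty] at hne
    subst hne
    apply hsep
    have hfin : ((hS₀.toFinset.image (fun x => ⟪w, x⟫)) : Finset ℝ).Nonempty := by
      simp [Set.Finite.toFinset_nonempty, Set.nonempty_of_mem hx₀]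
    refine ⟨w, (hS₀.toFinset.image (fun x => ⟪w, x⟫)).min' hfin - 1, ?_, by simp⟩
    intro x hx
    have : (hS₀.toFinset.image (fun x => ⟪w, x⟫)).min' hfin ≤ ⟪w, x⟫ :=
      Finset.min'_le _ _ (Finset.mem_image_of_mem _ (hS₀.mem_toFinset.mpr hx))
    linarith
  -- take the max of ⟪w, ·⟫ over S₁
  have hfin1 : ((hS₁.toFinset.image (fun x => ⟪w, x⟫)) : Finset ℝ).Nonempty := by
    simp [Set.Finite.toFinset_nonempty, hS₁ne]
  set b := (hS₁.toFinset.image (fun x => ⟪w, x⟫)).max' hfin1 with hb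
  obtain ⟨z, hzmem, hz⟩ : ∃ z ∈ S₁, ⟪w, z⟫ = b := by
    obtain ⟨z, hz, hz'⟩ := Finset.mem_image.mp ((hS₁.toFinset.image (fun x => ⟪w, x⟫)).max'_mem hfin1)
    exact ⟨z, hS₁.mem_toFinset.mp hz, hz'⟩
  have hble : ∀ x ∈ S₁, ⟪w, x⟫ ≤ b := fun x hx =>
    Finset.le_max' _ _ (Finset.mem_image_of_mem _ (hS₁.mem_toFinset.mpr hx))
  -- non-separability gives x* ∈ S₀ with ⟪w, x*⟫ ≤ b
  obtain ⟨xs, hxs, hxsb⟩ : ∃ x ∈ S₀, ⟪w, x⟫ ≤ b := by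
    by_contra hno
    push_neg at hno
    exact hsep ⟨w, b, fun x hx => hno x hx, hble⟩
  -- φ⟪w, xs⟫ ≤ η₁
  have hφxs : φ ⟪w, xs⟫ ≤ η₁ := by
    calc φ ⟪w, xs⟫ ≤ φ ⟪w, z⟫ := hmono (by rw [hz]; exact hxsb)
    _ ≤ η₁ := h1 z hzmem
  -- ⟪w, P xs⟫ ≥ 1 - 2η₁
  have hsum : ⟪w, xs + P xs⟫ = ⟪w, xs⟫ + ⟪w, P xs⟫ := inner_add_right _ _ _
  have hP : (1 : ℝ) - 2 * η₁ ≤ ⟪w, P xs⟫ := by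
    have h0' := h0 xs hxs
    have hle : ⟪w, xs⟫ ≤ ⟪w, xs + P xs⟫ := by
      by_contra hc
      push_neg at hc
      have := hmono hc.le
      linarith
    have := hup _ _ hle
    rw [hsum] at this h0'
    linarith
  -- ⟪w, P x₀⟫ ≥ 1 - 2η₁ - k
  have hPx₀ : (1 : ℝ) - 2 * η₁ - k ≤ ⟪w, P x₀⟫ := by
    have h1' : ⟪w, P xs⟫ - ⟪w, P x₀⟫ = ⟪w, P xs - P x₀⟫ := (inner_sub_right _ _ _).symm
    have h2' : ⟪w, P xs - P x₀⟫ ≤ ‖w‖ * ‖P xs - P x₀‖ := real_inner_le_norm _ _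
    have h3' := hk xs hxs x₀ hx₀
    rw [hw, one_mul] at h2'
    linarith
  have hnn : (0 : ℝ) ≤ ⟪w, P x₀⟫ := by linarith
  constructor
  · have := hlow 0 ⟪w, P x₀⟫ hnn
    rw [hφ0, sub_zero, sub_zero] at this
    nlinarith
  · have hle : ⟪w, x₁⟫ ≤ ⟪w, x₁ + P x₀⟫ := by
      rw [inner_add_right]; linarith
    have := hlow _ _ hle
    rw [inner_add_right] at this ⊢
    nlinarith
end

section
/- For all natural numbers N ≥ 1, every real c > 0 and every real k, one has ∑_{i=0}^{N} [ |1/2 − i/N| < c·N^{−k} ] · C(N, i) / 2^N ≤ (2c·N^{1−k} + 1) · C(N, ⌊N/2⌋) / 2^N, where [·] equals 1 when the condition holds and 0 otherwise, C(N, i) denotes the binomial coefficient, and N^{−k}, N^{1−k} are real powers of N. Equivalently: if N₁ is the number of successes in N independent fair coin flips, then the probability that |1/2 − N₁/N| < c·N^{−k} is at most (2c·N^{1−k} + 1)·C(N, ⌊N/2⌋)·2^{−N}. -/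
open Finset

theorem card_le_two_mul_add_one_of_abs_sub_lt {s : Finset ℕ} {a t : ℝ} (ht : 0 ≤ t)
    (h : ∀ i ∈ s, |a - i| < t) : (#s : ℝ) ≤ 2 * t + 1 := by
  rcases s.eq_empty_or_nonempty with rfl | hs
  · simp only [card_empty, Nat.cast_zero]
    linarith
  have hmin := abs_lt.mp (h _ (s.min'_mem hs))
  have hmax := abs_lt.mp (h _ (s.max'_mem hs))
  have hcard : #s + s.min' hs ≤ s.max' hs + 1 := by
    calc #s + s.min' hs ≤ #(Icc (s.min' hs) (s.max' hs)) + s.min' hs := by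
          gcongr
          exact fun i hi => mem_Icc.mpr ⟨s.min'_le i hi, s.le_max' i hi⟩
      _ = s.max' hs + 1 := by
          rw [Nat.card_Icc]
          have := s.min'_le _ (s.max'_mem hs)
          omega
  have : ((#s + s.min' hs : ℕ) : ℝ) ≤ (s.max' hs + 1 : ℕ) := by exact_mod_cast hcard
  push_cast at this
  linarith

theorem sum_choose_le_card_mul_choose_middle (n : ℕ) (s : Finset ℕ) :
    ∑ i ∈ s, n.choose i ≤ #s * n.choose (n / 2) := by
  simpa using sum_le_card_nsmul s _ _ fun i _ => Nat.choose_le_middle i n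

theorem abs_sub_lt_rpow_of_abs_half_sub_div_lt {x y c k : ℝ} (hx : 0 < x)
    (h : |1 / 2 - y / x| < c * x ^ (-k)) : |x / 2 - y| < c * x ^ (1 - k) := by
  have hscale : x / 2 - y = x * (1 / 2 - y / x) := by field_simp
  have hpow : x * x ^ (-k) = x ^ (1 - k) := by
    rw [sub_eq_add_neg, Real.rpow_add hx, Real.rpow_one]
  calc |x / 2 - y| = x * |1 / 2 - y / x| := by rw [hscale, abs_mul, abs_of_pos hx]
    _ < x * (c * x ^ (-k)) := by gcongr
    _ = c * x ^ (1 - k) := by rw [← hpow]; ring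

/-- Counting estimate for the optimality of the `O(1/√N)` generalization gap: if `N₁` is
the number of successes in `N` fair coin flips, then the probability that
`|1/2 − N₁/N| < c·N^{−k}` is at most `(2c·N^{1−k} + 1) · C(N, ⌊N/2⌋) / 2^N`. -/
theorem prob_small_gap_le (N : ℕ) (hN : 1 ≤ N) (c k : ℝ) (hc : 0 < c) :
    ∑ i ∈ Finset.range (N + 1),
      (if |1 / 2 - (i : ℝ) / N| < c * (N : ℝ) ^ (-k) then (N.choose i : ℝ) else 0)
        / 2 ^ N
    ≤ (2 * c * (N : ℝ) ^ (1 - k) + 1) * (N.choose (N / 2) : ℝ) / 2 ^ N := by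
  have hN0 : (0 : ℝ) < N := by exact_mod_cast hN
  set S := (range (N + 1)).filter fun i : ℕ => |1 / 2 - (i : ℝ) / N| < c * (N : ℝ) ^ (-k)
  have hS : (#S : ℝ) ≤ 2 * (c * (N : ℝ) ^ (1 - k)) + 1 :=
    card_le_two_mul_add_one_of_abs_sub_lt (by positivity) fun i hi =>
      abs_sub_lt_rpow_of_abs_half_sub_div_lt hN0 (mem_filter.mp hi).2
  rw [← sum_div, ← sum_filter]
  gcongr
  calc ∑ i ∈ S, (N.choose i : ℝ) ≤ #S * N.choose (N / 2) := by
        exact_mod_cast sum_choose_le_card_mul_choose_middle N S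
    _ ≤ (2 * c * (N : ℝ) ^ (1 - k) + 1) * N.choose (N / 2) := by
        gcongr
        linarith
end

section
/- For every real c > 0 and every real k with 1/2 < k ≤ 1, there exists a constant C > 0 such that for all natural numbers N ≥ 1, ∑_{i=0}^{N} [ |1/2 − i/N| < c·N^{−k} ] · C(N, i) / 2^N ≤ C · N^{1/2 − k}, where [·] equals 1 when the condition holds and 0 otherwise, C(N, i) denotes the binomial coefficient, and N^{−k}, N^{1/2−k} are real powers of N. -/
/-!
The event confines `i` to the window `|N/2 - i| < c·N^(1-k)`, which holds at most
`2c·N^(1-k) + 1` integers, and every binomial weight is at most `N^(-1/2)`: the recursion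
`(n+1)·C(2n+2, n+1) = 2(2n+1)·C(2n, n)` gives `C(2n, n)²·(2n+1) ≤ 16ⁿ`, hence
`C(N, i)²·N ≤ 4^N` for all `i`. Multiplying gives `(2c+1)·N^(1/2-k)`.
-/

namespace Nat

theorem centralBinom_sq_mul_le (n : ℕ) : centralBinom n ^ 2 * (2 * n + 1) ≤ 16 ^ n := by
  induction n with
  | zero => simp
  | succ n ih =>
    refine Nat.le_of_mul_le_mul_left ?_ (by positivity : 0 < (n + 1) ^ 2)
    calc (n + 1) ^ 2 * (centralBinom (n + 1) ^ 2 * (2 * (n + 1) + 1))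
        = ((n + 1) * centralBinom (n + 1)) ^ 2 * (2 * n + 3) := by ring
      _ = 4 * (2 * n + 1) * (2 * n + 3) * (centralBinom n ^ 2 * (2 * n + 1)) := by
        rw [succ_mul_centralBinom_succ]; ring
      _ ≤ 4 * (2 * n + 1) * (2 * n + 3) * 16 ^ n := by gcongr
      _ ≤ 16 * (n + 1) ^ 2 * 16 ^ n := Nat.mul_le_mul_right _ (by nlinarith)
      _ = (n + 1) ^ 2 * 16 ^ (n + 1) := by ring

theorem two_mul_choose_middle_eq_centralBinom_succ (m : ℕ) :
    2 * (2 * m + 1).choose m = centralBinom (m + 1) := by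
  rw [centralBinom, show 2 * (m + 1) = 2 * m + 1 + 1 by ring, choose_succ_succ,
    choose_symm_half]
  ring

theorem choose_sq_mul_le_four_pow (n r : ℕ) : n.choose r ^ 2 * n ≤ 4 ^ n := by
  obtain ⟨m, rfl | rfl⟩ := Nat.even_or_odd' n
  · calc (2 * m).choose r ^ 2 * (2 * m) ≤ centralBinom m ^ 2 * (2 * m + 1) := by
          gcongr
          · exact choose_le_centralBinom r m
          · omega
      _ ≤ 16 ^ m := centralBinom_sq_mul_le m
      _ = 4 ^ (2 * m) := by rw [pow_mul]; norm_num
  · have hmid : (2 * m + 1).choose r ≤ (2 * m + 1).choose m := by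
      simpa [show (2 * m + 1) / 2 = m by omega] using choose_le_middle r (2 * m + 1)
    refine Nat.le_of_mul_le_mul_left ?_ (by norm_num : 0 < 4)
    calc 4 * ((2 * m + 1).choose r ^ 2 * (2 * m + 1))
        ≤ (2 * (2 * m + 1).choose m) ^ 2 * (2 * (m + 1) + 1) := by
          rw [mul_pow, ← mul_assoc]; gcongr <;> omega
      _ ≤ 16 ^ (m + 1) :=
          two_mul_choose_middle_eq_centralBinom_succ m ▸ centralBinom_sq_mul_le (m + 1)
      _ = 4 * 4 ^ (2 * m + 1) := by rw [show (16 : ℕ) = 4 ^ 2 by norm_num, ← pow_mul]; ring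

end Nat

theorem choose_div_two_pow_le_rpow (n r : ℕ) (hn : 0 < n) :
    (n.choose r : ℝ) / 2 ^ n ≤ (n : ℝ) ^ (-(1 / 2 : ℝ)) := by
  have hsqrt : (n.choose r : ℝ) * √n ≤ 2 ^ n := by
    have h : (n.choose r : ℝ) ^ 2 * n ≤ (2 ^ n) ^ 2 := by
      rw [← pow_mul, mul_comm n 2, pow_mul]; norm_num
      exact_mod_cast Nat.choose_sq_mul_le_four_pow n r
    rw [← Real.sqrt_sq (by positivity : (0 : ℝ) ≤ 2 ^ n),
      ← Real.sqrt_sq (Nat.cast_nonneg (n.choose r) : (0 : ℝ) ≤ _),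
      ← Real.sqrt_mul (by positivity)]
    exact Real.sqrt_le_sqrt h
  rw [Real.rpow_neg (Nat.cast_nonneg _), ← Real.sqrt_eq_rpow, div_le_iff₀ (by positivity),
    ← div_eq_inv_mul, le_div_iff₀ (by positivity)]
  exact hsqrt

theorem card_le_two_mul_add_one_of_forall_abs_sub_lt {s : Finset ℕ} {x t : ℝ} (ht : 0 ≤ t)
    (hs : ∀ i ∈ s, |x - i| < t) : (s.card : ℝ) ≤ 2 * t + 1 := by
  rcases s.eq_empty_or_nonempty with rfl | hne
  · simp only [Finset.card_empty, Nat.cast_zero]; linarith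
  have hIcc : s.card + s.min' hne ≤ s.max' hne + 1 := by
    have hsub := Finset.card_le_card (t := Finset.Icc (s.min' hne) (s.max' hne))
      fun i hi => Finset.mem_Icc.2 ⟨s.min'_le i hi, s.le_max' i hi⟩
    have hle := s.min'_le _ (s.max'_mem hne)
    rw [Nat.card_Icc] at hsub
    omega
  have hmin := abs_lt.1 (hs _ (s.min'_mem hne))
  have hmax := abs_lt.1 (hs _ (s.max'_mem hne))
  have hIcc' : (s.card : ℝ) + s.min' hne ≤ s.max' hne + 1 := by exact_mod_cast hIcc
  linarith [hmin.1, hmax.2]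

theorem prob_small_gap_bigO_general (c k : ℝ) (hc : 0 < c) (hk2 : k ≤ 1) :
    ∃ C : ℝ, 0 < C ∧ ∀ N : ℕ, 1 ≤ N →
      ∑ i ∈ Finset.range (N + 1),
        (if |1 / 2 - (i : ℝ) / N| < c * (N : ℝ) ^ (-k) then (N.choose i : ℝ) else 0)
          / 2 ^ N
      ≤ C * (N : ℝ) ^ (1 / 2 - k : ℝ) := by
  refine ⟨2 * c + 1, by linarith, fun N hN => ?_⟩
  have hN0 : (0 : ℝ) < N := by exact_mod_cast hN
  set S := (Finset.range (N + 1)).filter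
    fun i : ℕ => |1 / 2 - (i : ℝ) / N| < c * (N : ℝ) ^ (-k)
  have hwindow : ∀ i ∈ S, |(N : ℝ) / 2 - i| < c * (N : ℝ) ^ (1 - k) := by
    intro i hi
    have hrescale : (N : ℝ) / 2 - i = (1 / 2 - (i : ℝ) / N) * N := by field_simp
    calc |(N : ℝ) / 2 - i| = |1 / 2 - (i : ℝ) / N| * N := by
          rw [hrescale, abs_mul, abs_of_pos hN0]
      _ < c * (N : ℝ) ^ (-k) * N := mul_lt_mul_of_pos_right (Finset.mem_filter.1 hi).2 hN0
      _ = c * (N : ℝ) ^ (1 - k) := by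
          rw [mul_assoc, ← Real.rpow_add_one hN0.ne', neg_add_eq_sub]
  have hcard := card_le_two_mul_add_one_of_forall_abs_sub_lt (by positivity) hwindow
  calc _ = ∑ i ∈ S, (N.choose i : ℝ) / 2 ^ N := by
        simp only [ite_div, zero_div, S, Finset.sum_filter]
    _ ≤ S.card * (N : ℝ) ^ (-(1 / 2 : ℝ)) := by
        simpa using Finset.sum_le_card_nsmul S _ _ fun i _ => choose_div_two_pow_le_rpow N i hN
    _ ≤ (2 * (c * (N : ℝ) ^ (1 - k)) + 1) * (N : ℝ) ^ (-(1 / 2 : ℝ)) := by gcongr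
    _ = 2 * c * (N : ℝ) ^ (1 / 2 - k : ℝ) + (N : ℝ) ^ (-(1 / 2 : ℝ)) := by
        rw [add_mul, mul_assoc, mul_assoc, ← Real.rpow_add hN0, one_mul]; ring_nf
    _ ≤ (2 * c + 1) * (N : ℝ) ^ (1 / 2 - k : ℝ) := by
        have hmono : (N : ℝ) ^ (-(1 / 2 : ℝ)) ≤ (N : ℝ) ^ (1 / 2 - k : ℝ) :=
          Real.rpow_le_rpow_of_exponent_le (by exact_mod_cast hN) (by linarith)
        linarith

/-- Optimality of the `O(1/√N)` generalization gap: for `1/2 < k ≤ 1`, the probability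
that the empirical error of a random-label classifier deviates from its population error
`1/2` by less than `c·N^{−k}` is `O(N^{1/2−k})`. -/
theorem prob_small_gap_bigO (c k : ℝ) (hc : 0 < c) (hk1 : 1 / 2 < k) (hk2 : k ≤ 1) :
    ∃ C : ℝ, 0 < C ∧ ∀ N : ℕ, 1 ≤ N →
      ∑ i ∈ Finset.range (N + 1),
        (if |1 / 2 - (i : ℝ) / N| < c * (N : ℝ) ^ (-k) then (N.choose i : ℝ) else 0)
          / 2 ^ N
      ≤ C * (N : ℝ) ^ (1 / 2 - k : ℝ) :=
  prob_small_gap_bigO_general c k hc hk2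
end

section
/- Let X be a measurable space, m ≥ 1, μ a probability measure on X × Fin m, and l_p ∈ Fin m with μ{p : p.2 ≠ l_p} > 0. Let k, N be natural numbers with 1 ≤ k ≤ N. On Ω := Fin N → (X × Fin m) equip the product probability measure ℙ := μ^{⊗N}, and let A := {ω ∈ Ω : the set {i : (ω i).2 ≠ l_p} has at least k elements}. Define S : Ω → (Fin k → X × Fin m) by S(ω)(j) := ω(i_j(ω)), where i_1(ω) < i_2(ω) < ⋯ < i_k(ω) are the k smallest elements of {i : (ω i).2 ≠ l_p} whenever this set has at least k elements (and S is given an arbitrary fixed measurable definition elsewhere). Then the pushforward of the conditional measure ℙ[·|A] under S equals the k-fold product measure (μ[·|{p : p.2 ≠ l_p}])^{⊗k}. -/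
open MeasureTheory ProbabilityTheory Function Set Finset
open scoped ENNReal

/-!
If `t 0 < ⋯ < t (k-1)` are prescribed as the first `k` indices at which the sample falls in `B`,
and the samples there are prescribed to lie in `s 0, …, s (k-1)`, the event is a box: coordinate
`t j` lies in `B ∩ s j`, every other coordinate below `t (k-1)` lies in `Bᶜ`, the rest are free.
Its `μ^{⊗N}`-mass is therefore `∏ j, μ (B ∩ s j)` times a factor depending only on `t`. Summing
over the disjoint choices of `t` and normalising by the case `s = univ` leaves
`∏ j, μ (B ∩ s j) / μ B`, which is the product of the conditional measures.
-/

section FirstHits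

variable {k N : ℕ}

/-- `t` lists, in increasing order, the `k` smallest elements of `P`. -/
def IsFirstHits (P : Set (Fin N)) (t : Fin k → Fin N) : Prop :=
  StrictMono t ∧ (∀ j, t j ∈ P) ∧ ∀ i ∈ P, i ∉ range t → ∀ j, t j < i

namespace IsFirstHits

variable {P : Set (Fin N)} {e t : Fin k → Fin N}

lemma not_lt_of_eqOn_Iio (he : IsFirstHits P e) (ht : IsFirstHits P t) {j : Fin k}
    (hprev : EqOn e t (Set.Iio j)) : ¬ e j < t j := by
  intro hlt
  have hnot : e j ∉ range t := by
    rintro ⟨j', hj'⟩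
    have hj'j : j' < j := ht.1.lt_iff_lt.mp (hj' ▸ hlt)
    exact hj'j.ne (he.1.injective ((hprev hj'j).trans hj'))
  exact (ht.2.2 (e j) (he.2.1 j) hnot j).asymm hlt

/-- At a first disagreement `j`, the smaller of `e j` and `t j` lies in `P` but is skipped by the
other map. -/
theorem eq (he : IsFirstHits P e) (ht : IsFirstHits P t) : e = t := by
  funext j
  induction j using WellFoundedLT.induction with
  | _ j ih =>
    exact le_antisymm (not_lt.1 (ht.not_lt_of_eqOn_Iio he fun j' hj' => (ih j' hj').symm))
      (not_lt.1 (he.not_lt_of_eqOn_Iio ht ih))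

lemma le_card [DecidablePred (· ∈ P)] (ht : IsFirstHits P t) : k ≤ #{i | i ∈ P} :=
  calc k = #(univ : Finset (Fin k)) := by simp
    _ ≤ #{i | i ∈ P} :=
      card_le_card_of_injOn t (fun j _ => by simpa using ht.2.1 j) ht.1.injective.injOn

end IsFirstHits

end FirstHits

lemma mem_univ_pi_extend {ι κ α : Type*} {t : κ → ι} (ht : Injective t) (f : κ → Set α)
    (g : ι → Set α) (ω : ι → α) :
    ω ∈ univ.pi (extend t f g) ↔ (∀ j, ω (t j) ∈ f j) ∧ ∀ i ∉ range t, ω i ∈ g i := by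
  simp only [mem_univ_pi]
  refine ⟨fun h => ⟨fun j => ?_, fun i hi => ?_⟩, fun ⟨hf, hg⟩ i => ?_⟩
  · simpa [ht.extend_apply] using h (t j)
  · simpa [extend_apply' f g i hi] using h i
  · by_cases hi : i ∈ range t
    · obtain ⟨j, rfl⟩ := hi
      simpa [ht.extend_apply] using hf j
    · simpa [extend_apply' f g i hi] using hg i hi

section Box

variable {α : Type*} {k N : ℕ}

def firstHitsIn (B : Set α) (s : Fin k → Set α) : Set (Fin N → α) :=
  {ω | ∃ t, IsFirstHits {i | ω i ∈ B} t ∧ ∀ j, ω (t j) ∈ s j}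

def firstHitsBox (B : Set α) (s : Fin k → Set α) (t : Fin k → Fin N) : Fin N → Set α :=
  extend t (fun j => B ∩ s j) fun i => {x | x ∈ B → ∀ j, t j < i}

lemma mem_univ_pi_firstHitsBox {B : Set α} {s : Fin k → Set α} {t : Fin k → Fin N}
    (ht : StrictMono t) (ω : Fin N → α) :
    ω ∈ univ.pi (firstHitsBox B s t) ↔ IsFirstHits {i | ω i ∈ B} t ∧ ∀ j, ω (t j) ∈ s j := by
  rw [firstHitsBox, mem_univ_pi_extend ht.injective]
  simp only [IsFirstHits, mem_inter_iff, mem_ofPred_eq, forall_and]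
  tauto

open Classical in
lemma firstHitsIn_eq_biUnion (B : Set α) (s : Fin k → Set α) :
    (firstHitsIn B s : Set (Fin N → α)) =
      ⋃ t ∈ ({t | StrictMono t} : Set (Fin k → Fin N)).toFinset, univ.pi (firstHitsBox B s t) := by
  ext ω
  simp only [firstHitsIn, mem_ofPred_eq, mem_iUnion, mem_toFinset, exists_prop]
  exact ⟨fun ⟨t, ht, hs⟩ => ⟨t, ht.1, (mem_univ_pi_firstHitsBox ht.1 ω).2 ⟨ht, hs⟩⟩,
    fun ⟨t, ht, hω⟩ => ⟨t, (mem_univ_pi_firstHitsBox ht ω).1 hω⟩⟩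

open Classical in
lemma pairwiseDisjoint_univ_pi_firstHitsBox (B : Set α) (s : Fin k → Set α) :
    (({t | StrictMono t} : Set (Fin k → Fin N)).toFinset : Set (Fin k → Fin N)).PairwiseDisjoint
      fun t => univ.pi (firstHitsBox B s t) := by
  intro t ht t' ht' hne
  refine Set.disjoint_left.2 fun ω hω hω' => hne ?_
  simp only [coe_toFinset, mem_ofPred_eq] at ht ht'
  exact ((mem_univ_pi_firstHitsBox ht ω).1 hω).1.eq ((mem_univ_pi_firstHitsBox ht' ω).1 hω').1

variable [MeasurableSpace α]

lemma measurableSet_firstHitsBox {B : Set α} (hB : MeasurableSet B) {s : Fin k → Set α}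
    (hs : ∀ j, MeasurableSet (s j)) {t : Fin k → Fin N} (ht : Injective t) (i : Fin N) :
    MeasurableSet (firstHitsBox B s t i) := by
  by_cases hi : ∃ j, t j = i
  · obtain ⟨j, rfl⟩ := hi
    simpa [firstHitsBox, ht.extend_apply] using hB.inter (hs j)
  · rw [firstHitsBox, extend_apply' _ _ i hi]
    exact hB.imp (MeasurableSet.const _)

variable (μ : Measure α)

noncomputable def gapWeight (B : Set α) (t : Fin k → Fin N) : ℝ≥0∞ :=
  ∏ i ∈ (univ.image t)ᶜ, μ {x | x ∈ B → ∀ j, t j < i}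

lemma pi_univ_pi_firstHitsBox [SigmaFinite μ] (B : Set α) (s : Fin k → Set α)
    {t : Fin k → Fin N} (ht : Injective t) :
    Measure.pi (fun _ => μ) (univ.pi (firstHitsBox B s t)) =
      (∏ j, μ (B ∩ s j)) * gapWeight μ B t := by
  rw [Measure.pi_pi, ← prod_mul_prod_compl (univ.image t), prod_image fun _ _ _ _ h => ht h]
  congr 1
  · exact prod_congr rfl fun j _ => by rw [firstHitsBox, ht.extend_apply]
  · refine prod_congr rfl fun i hi => ?_
    rw [firstHitsBox, extend_apply' _ _ i (by simpa using hi)]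

lemma gapWeight_castLE [IsProbabilityMeasure μ] (B : Set α) (hkN : k ≤ N) :
    gapWeight μ B (Fin.castLE hkN) = 1 := by
  refine prod_eq_one fun i hi => ?_
  have hki : k ≤ i := by
    by_contra! h
    exact (mem_compl.1 hi) (mem_image.2 ⟨⟨i, h⟩, mem_univ _, rfl⟩)
  have : ∀ j : Fin k, Fin.castLE hkN j < i := fun j => Fin.lt_def.2 (lt_of_lt_of_le j.2 hki)
  simp [this]

lemma gapWeight_ne_top [IsFiniteMeasure μ] (B : Set α) (t : Fin k → Fin N) :
    gapWeight μ B t ≠ ∞ :=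
  ENNReal.prod_ne_top fun _ _ => measure_ne_top _ _

open Classical in
lemma measure_firstHitsIn [IsProbabilityMeasure μ] {B : Set α} (hB : MeasurableSet B)
    {s : Fin k → Set α} (hs : ∀ j, MeasurableSet (s j)) :
    Measure.pi (fun _ : Fin N => μ) (firstHitsIn B s) =
      (∏ j, μ (B ∩ s j)) * ∑ t ∈ ({t | StrictMono t} : Set (Fin k → Fin N)).toFinset,
        gapWeight μ B t := by
  rw [firstHitsIn_eq_biUnion, measure_biUnion_finset (pairwiseDisjoint_univ_pi_firstHitsBox B s),
    mul_sum]
  · exact sum_congr rfl fun t ht => pi_univ_pi_firstHitsBox μ B s (mem_toFinset.1 ht).injective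
  · exact fun t ht => .univ_pi (measurableSet_firstHitsBox hB hs (mem_toFinset.1 ht).injective)

open Classical in
lemma measurableSet_firstHitsIn {B : Set α} (hB : MeasurableSet B) {s : Fin k → Set α}
    (hs : ∀ j, MeasurableSet (s j)) : MeasurableSet (firstHitsIn B s : Set (Fin N → α)) := by
  rw [firstHitsIn_eq_biUnion]
  exact Finset.measurableSet_biUnion _ fun t ht =>
    .univ_pi (measurableSet_firstHitsBox hB hs (mem_toFinset.1 ht).injective)

theorem map_cond_firstHits_eq_pi_cond [IsProbabilityMeasure μ] {B : Set α}
    (hB : MeasurableSet B) (hkN : k ≤ N) {S : (Fin N → α) → Fin k → α} (hS : Measurable S)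
    (hSdef : ∀ ω t, IsFirstHits {i | ω i ∈ B} t → S ω = ω ∘ t) :
    ((Measure.pi fun _ : Fin N => μ)[|{ω | ∃ t : Fin k → Fin N, IsFirstHits {i | ω i ∈ B} t}]).map
        S = Measure.pi fun _ : Fin k => μ[|B] := by
  classical
  set C := ∑ t ∈ ({t | StrictMono t} : Set (Fin k → Fin N)).toFinset, gapWeight μ B t
  set A : Set (Fin N → α) := {ω | ∃ t : Fin k → Fin N, IsFirstHits {i | ω i ∈ B} t}
  have hA : A = firstHitsIn B fun _ : Fin k => univ := by
    simp [A, firstHitsIn]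
  have hpre : ∀ s, A ∩ S ⁻¹' univ.pi s = firstHitsIn B s := by
    intro s
    ext ω
    refine ⟨fun ⟨⟨t, ht⟩, hω⟩ => ⟨t, ht, fun j => ?_⟩, fun ⟨t, ht, hω⟩ => ⟨⟨t, ht⟩, ?_⟩⟩
    · simpa [hSdef ω t ht] using hω j (mem_univ j)
    · simpa [hSdef ω t ht] using hω
  have hC0 : C ≠ 0 := by
    refine (zero_lt_one.trans_le ?_).ne'
    rw [← gapWeight_castLE μ B hkN]
    exact single_le_sum (fun _ _ => bot_le) (mem_toFinset.2 (Fin.strictMono_castLE hkN))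
  have hCtop : C ≠ ∞ := ENNReal.sum_ne_top.2 fun t _ => gapWeight_ne_top μ B t
  have hAm : MeasurableSet A := hA ▸ measurableSet_firstHitsIn hB fun _ => .univ
  refine (Measure.pi_eq fun s hs => ?_).symm
  rw [Measure.map_apply hS (.univ_pi hs), cond_apply hAm, hpre, hA, measure_firstHitsIn μ hB hs,
    measure_firstHitsIn μ hB fun _ => .univ, ← ENNReal.div_eq_inv_mul,
    ENNReal.mul_div_mul_right _ _ hC0 hCtop]
  simp_rw [cond_apply hB, ← ENNReal.div_eq_inv_mul]
  rw [ENNReal.prod_div_distrib_of_ne_top fun _ _ => measure_ne_top _ _, inter_univ]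

end Box

theorem subsample_first_k_ne_label_iid_general
    {X : Type*} [MeasurableSpace X] {m : ℕ}
    (μ : Measure (X × Fin m)) [IsProbabilityMeasure μ] (l_p : Fin m)
    (k N : ℕ) (hkN : k ≤ N)
    (idx : (Fin N → X × Fin m) → Fin k → Fin N)
    (S : (Fin N → X × Fin m) → Fin k → X × Fin m)
    (hS : Measurable S)
    (A : Set (Fin N → X × Fin m))
    (hA : A = {ω | k ≤ (Finset.univ.filter fun i => (ω i).2 ≠ l_p).card})
    -- on `A`, `idx ω` enumerates, in increasing order, the `k` smallest indices whose
    -- label differs from `l_p`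
    (hidx : ∀ ω ∈ A, StrictMono (idx ω) ∧ (∀ j, (ω (idx ω j)).2 ≠ l_p) ∧
      ∀ i : Fin N, (ω i).2 ≠ l_p → i ∉ Set.range (idx ω) → ∀ j, idx ω j < i)
    (hSdef : ∀ ω ∈ A, ∀ j, S ω j = ω (idx ω j)) :
    ((Measure.pi fun _ : Fin N => μ)[|A]).map S =
      Measure.pi fun _ : Fin k => μ[|{p | p.2 ≠ l_p}] := by
  set B : Set (X × Fin m) := {p | p.2 ≠ l_p}
  have hidx_firstHits : ∀ ω ∈ A, IsFirstHits {i | ω i ∈ B} (idx ω) := hidx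
  have hA_firstHits : A = {ω | ∃ t : Fin k → Fin N, IsFirstHits {i | ω i ∈ B} t} := by
    ext ω
    exact ⟨fun hω => ⟨idx ω, hidx_firstHits ω hω⟩, fun ⟨t, ht⟩ => hA ▸ ht.le_card⟩
  have hSfirst : ∀ ω t, IsFirstHits {i | ω i ∈ B} t → S ω = ω ∘ t := by
    intro ω t ht
    have hω : ω ∈ A := hA_firstHits ▸ ⟨t, ht⟩
    rw [← (hidx_firstHits ω hω).eq ht]
    exact funext (hSdef ω hω)
  rw [hA_firstHits]
  exact map_cond_firstHits_eq_pi_cond μ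
    ((measurableSet_singleton l_p).compl.preimage measurable_snd) hkN hS hSfirst

/-- The i.i.d.-subsample lemma: for `N` i.i.d. samples from a probability measure `μ` on
`X × Fin m`, conditionally on there being at least `k` samples with label different from
`l_p`, the first `k` such samples (i.e. the samples at the `k` smallest indices `i` with
`(ω i).2 ≠ l_p`, picked out by `idx`) are distributed as `k` i.i.d. draws from `μ`
conditioned on the label being different from `l_p`. -/
theorem subsample_first_k_ne_label_iid
    {X : Type*} [MeasurableSpace X] {m : ℕ} (hm : 1 ≤ m)
    (μ : Measure (X × Fin m)) [IsProbabilityMeasure μ] (l_p : Fin m)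
    (hpos : 0 < μ {p | p.2 ≠ l_p})
    (k N : ℕ) (hk : 1 ≤ k) (hkN : k ≤ N)
    (idx : (Fin N → X × Fin m) → Fin k → Fin N)
    (S : (Fin N → X × Fin m) → Fin k → X × Fin m)
    (hS : Measurable S)
    (A : Set (Fin N → X × Fin m))
    (hA : A = {ω | k ≤ (Finset.univ.filter fun i => (ω i).2 ≠ l_p).card})
    -- on `A`, `idx ω` enumerates, in increasing order, the `k` smallest indices whose
    -- label differs from `l_p`
    (hidx : ∀ ω ∈ A, StrictMono (idx ω) ∧ (∀ j, (ω (idx ω j)).2 ≠ l_p) ∧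
      ∀ i : Fin N, (ω i).2 ≠ l_p → i ∉ Set.range (idx ω) → ∀ j, idx ω j < i)
    (hSdef : ∀ ω ∈ A, ∀ j, S ω j = ω (idx ω j)) :
    ((Measure.pi fun _ : Fin N => μ)[|A]).map S =
      Measure.pi fun _ : Fin k => μ[|{p | p.2 ≠ l_p}] :=
  subsample_first_k_ne_label_iid_general μ l_p k N hkN idx S hS A hA hidx hSdef
end

section
/- Let X be a measurable space, m ≥ 1, μ a probability measure on X × Fin m, and l_p ∈ Fin m with μ{p : p.2 = l_p} > 0. Let q, k, N be natural numbers with 1 ≤ q ≤ k ≤ N. Let E be a function assigning to each label pattern ℓ : Fin N → Fin m a map E(ℓ) : Fin q → Fin N such that whenever the set {i : ℓ i = l_p} has at least k elements, E(ℓ) is injective and ℓ(E(ℓ)(j)) = l_p for every j ∈ Fin q (a deterministic, pattern-dependent selection of q of the label-l_p positions). On Ω := Fin N → (X × Fin m) equip the product probability measure ℙ := μ^{⊗N}, let labels(ω)(i) := (ω i).2, and let A := {ω : the set {i : (ω i).2 = l_p} has at least k elements}. Define S : Ω → (Fin q → X × Fin m) by S(ω)(j) := ω(E(labels(ω))(j)).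 Then the pushforward of the conditional measure ℙ[·|A] under S equals the q-fold product measure (μ[·|{p : p.2 = l_p}])^{⊗q}. -/
/-!
Split the conditioned sample space according to the label pattern `ℓ` of the `N` samples.
Given `ℓ`, the samples are independent, the `i`-th one distributed as `μ` conditioned on the
label `ℓ i`; the positions `E ℓ` are distinct and all carry the label `l_p`, so the selected
samples are `q` independent draws from `μ[|label = l_p]`. This law does not depend on `ℓ`,
so averaging over the admissible patterns leaves it unchanged.
-/

open MeasureTheory ProbabilityTheory

namespace MeasureTheory.Measure

variable {ι : Type*} [Fintype ι] {α : ι → Type*} [∀ i, MeasurableSpace (α i)]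

theorem pi_map_comp_of_injective {ι' : Type*} [Fintype ι'] (μ : ∀ i, Measure (α i))
    [∀ i, IsProbabilityMeasure (μ i)] {e : ι' → ι} (he : e.Injective) :
    (Measure.pi μ).map (fun ω j => ω (e j)) = Measure.pi fun j => μ (e j) := by
  have hindep : iIndepFun (fun j (ω : ∀ i, α i) => ω (e j)) (Measure.pi μ) :=
    (iIndepFun_pi (X := fun _ => id) fun _ => aemeasurable_id).precomp he
  rw [(iIndepFun_iff_map_fun_eq_pi_map fun j => (measurable_pi_apply (e j)).aemeasurable).1
    hindep]
  congr with j : 1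
  exact (measurePreserving_eval μ (e j)).map_eq

theorem cond_univ_pi (μ : ∀ i, Measure (α i)) [∀ i, IsFiniteMeasure (μ i)]
    {s : ∀ i, Set (α i)} (hs : ∀ i, MeasurableSet (s i)) :
    (Measure.pi μ)[|Set.univ.pi s] = Measure.pi fun i => (μ i)[|s i] := by
  refine (Measure.pi_eq fun t ht => ?_).symm
  rw [cond_apply (MeasurableSet.univ_pi hs), ← Set.pi_inter_distrib, Measure.pi_pi,
    Measure.pi_pi, ENNReal.prod_inv_distrib, ← Finset.prod_mul_distrib]
  · exact Finset.prod_congr rfl fun i _ => (cond_apply (hs i) _ _).symm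
  · exact fun i _ j _ _ => Or.inr (measure_ne_top _ _)

end MeasureTheory.Measure

namespace ProbabilityTheory

theorem map_eq_smul_of_map_cond_fiber_eq {Ω α β : Type*} [MeasurableSpace Ω]
    [MeasurableSpace β] [Fintype α] [MeasurableSpace α] [DiscreteMeasurableSpace α]
    {X : Ω → α} (hX : Measurable X) {f : Ω → β} (hf : Measurable f) (ν : Measure Ω)
    [IsFiniteMeasure ν] {κ : Measure β} (h : ∀ x, ν (X ⁻¹' {x}) ≠ 0 → (ν[|X ← x]).map f = κ) :
    ν.map f = ν Set.univ • κ :=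
  calc ν.map f = (∑ x, ν (X ⁻¹' {x}) • ν[|X ← x]).map f := by rw [sum_meas_smul_cond_fiber hX]
    _ = ∑ x, ν (X ⁻¹' {x}) • (ν[|X ← x]).map f := by
      simp only [Measure.map_finset_sum' hf.aemeasurable, Measure.map_smul]
    _ = ∑ x, ν (X ⁻¹' {x}) • κ := Finset.sum_congr rfl fun x _ => by
      by_cases h0 : ν (X ⁻¹' {x}) = 0
      · simp [h0]
      · rw [h x h0]
    _ = ν Set.univ • κ := by
      rw [← Finset.sum_smul, sum_measure_preimage_singleton _ fun y _ => hX (.singleton y),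
        Finset.coe_univ, Set.preimage_univ]

theorem preimage_snd_pi_eq_univ_pi {ι X Y : Type*} (ℓ : ι → Y) :
    (fun (ω : ι → X × Y) i => (ω i).2) ⁻¹' {ℓ} = Set.univ.pi fun i => Prod.snd ⁻¹' {ℓ i} := by
  ext ω
  simp [funext_iff]

theorem map_comp_cond_labels_eq_pi {ι ι' X Y : Type*} [Fintype ι] [Fintype ι']
    [MeasurableSpace X] [MeasurableSpace Y] [MeasurableSingletonClass Y]
    (μ : Measure (X × Y)) [IsProbabilityMeasure μ] {ℓ : ι → Y}
    (hℓ : Measure.pi (fun _ : ι => μ) ((fun ω i => (ω i).2) ⁻¹' {ℓ}) ≠ 0)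
    {e : ι' → ι} (he : e.Injective) {y : Y} (hy : ∀ j, ℓ (e j) = y) :
    ((Measure.pi fun _ : ι => μ)[|(fun ω i => (ω i).2) ⁻¹' {ℓ}]).map (fun ω j => ω (e j)) =
      Measure.pi fun _ : ι' => μ[|Prod.snd ⁻¹' {y}] := by
  rw [preimage_snd_pi_eq_univ_pi, Measure.pi_pi, Finset.prod_ne_zero_iff] at hℓ
  have := fun i => cond_isProbabilityMeasure (hℓ i (Finset.mem_univ i))
  rw [preimage_snd_pi_eq_univ_pi, Measure.cond_univ_pi _ fun i => measurable_snd (.singleton _),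
    Measure.pi_map_comp_of_injective _ he]
  simp only [hy]

end ProbabilityTheory

theorem subsample_pattern_selected_iid_general
    {X : Type*} [MeasurableSpace X] {m : ℕ}
    (μ : Measure (X × Fin m)) [IsProbabilityMeasure μ] (l_p : Fin m)
    (hpos : 0 < μ {p | p.2 = l_p})
    (q k N : ℕ) (hkN : k ≤ N)
    (E : (Fin N → Fin m) → Fin q → Fin N)
    (hE : ∀ ℓ : Fin N → Fin m, k ≤ (Finset.univ.filter fun i => ℓ i = l_p).card →
      Function.Injective (E ℓ) ∧ ∀ j, ℓ (E ℓ j) = l_p)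
    (S : (Fin N → X × Fin m) → Fin q → X × Fin m)
    (hS : Measurable S)
    (hSdef : ∀ ω : Fin N → X × Fin m, S ω = fun j => ω (E (fun i => (ω i).2) j))
    (A : Set (Fin N → X × Fin m))
    (hA : A = {ω | k ≤ (Finset.univ.filter fun i => (ω i).2 = l_p).card}) :
    ((Measure.pi fun _ : Fin N => μ)[|A]).map S =
      Measure.pi fun _ : Fin q => μ[|{p | p.2 = l_p}] := by
  set P := Measure.pi fun _ : Fin N => μ
  set labels : (Fin N → X × Fin m) → Fin N → Fin m := fun ω i => (ω i).2
  have hlabels : Measurable labels := by fun_prop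
  set admissible : Set (Fin N → Fin m) := {ℓ | k ≤ (Finset.univ.filter fun i => ℓ i = l_p).card}
  have hA' : A = labels ⁻¹' admissible := hA
  have hAm : MeasurableSet A := hA' ▸ hlabels .of_discrete
  have hPA : P A ≠ 0 := by
    have hconst : (fun _ => l_p) ∈ admissible := by simpa [admissible] using hkN
    refine (measure_pos_of_superset (hA' ▸ Set.preimage_mono
      (Set.singleton_subset_iff.2 hconst)) ?_).ne'
    rw [preimage_snd_pi_eq_univ_pi, Measure.pi_pi, Finset.prod_const]
    exact pow_ne_zero _ hpos.ne'
  have := cond_isProbabilityMeasure hPA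
  rw [map_eq_smul_of_map_cond_fiber_eq hlabels hS _ ?_, measure_univ, one_smul]
  intro ℓ hℓ
  obtain ⟨ω, hωA, hωℓ⟩ := nonempty_of_measure_ne_zero (inter_pos_of_cond_ne_zero hAm hℓ).ne'
  have hadm : ℓ ∈ admissible := by
    rw [hA'] at hωA
    exact (hωℓ : labels ω = ℓ) ▸ hωA
  obtain ⟨hinj, hsel⟩ := hE ℓ hadm
  have hS_fiber : S =ᵐ[P[|labels ⁻¹' {ℓ}]] fun ω j => ω (E ℓ j) := by
    filter_upwards [ae_cond_mem (hlabels (.singleton ℓ))] with ω' hω'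
    rw [hSdef, show (fun i => (ω' i).2) = ℓ from hω']
  rw [cond_cond_eq_cond_inter hAm (hlabels (.singleton ℓ)),
    Set.inter_eq_right.2 (hA' ▸ Set.preimage_mono (Set.singleton_subset_iff.2 hadm)),
    Measure.map_congr hS_fiber]
  exact map_comp_cond_labels_eq_pi μ (fun h => hℓ (cond_absolutelyContinuous h)) hinj hsel

/-- Exchangeability / i.i.d.-subsample lemma for pattern-dependent selections: for `N`
i.i.d. samples from a probability measure `μ` on `X × Fin m`, let `E` assign to each
label pattern `ℓ : Fin N → Fin m` an injective selection of `q` positions with label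
`l_p` (whenever at least `k ≥ q` such positions exist). Then, conditionally on there
being at least `k` samples with label `l_p`, the selected `q` samples are distributed as
`q` i.i.d. draws from `μ` conditioned on the label being `l_p`. -/
theorem subsample_pattern_selected_iid
    {X : Type*} [MeasurableSpace X] {m : ℕ} (hm : 1 ≤ m)
    (μ : Measure (X × Fin m)) [IsProbabilityMeasure μ] (l_p : Fin m)
    (hpos : 0 < μ {p | p.2 = l_p})
    (q k N : ℕ) (hq : 1 ≤ q) (hqk : q ≤ k) (hkN : k ≤ N)
    (E : (Fin N → Fin m) → Fin q → Fin N)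
    (hE : ∀ ℓ : Fin N → Fin m, k ≤ (Finset.univ.filter fun i => ℓ i = l_p).card →
      Function.Injective (E ℓ) ∧ ∀ j, ℓ (E ℓ j) = l_p)
    (S : (Fin N → X × Fin m) → Fin q → X × Fin m)
    (hS : Measurable S)
    (hSdef : ∀ ω : Fin N → X × Fin m, S ω = fun j => ω (E (fun i => (ω i).2) j))
    (A : Set (Fin N → X × Fin m))
    (hA : A = {ω | k ≤ (Finset.univ.filter fun i => (ω i).2 = l_p).card}) :
    ((Measure.pi fun _ : Fin N => μ)[|A]).map S =
      Measure.pi fun _ : Fin q => μ[|{p | p.2 = l_p}] :=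
  subsample_pattern_selected_iid_general μ l_p hpos q k N hkN E hE S hS hSdef A hA
end

section
/- Let X be a measurable space, m ≥ 1, and μ a probability measure on X × Fin m; write y for the second (label) coordinate. Fix l_p ∈ Fin m and set η := μ{(x,y) : y = l_p}; assume 0 < η < 1. Let μ₁ := μ[·|{y = l_p}] and μ₀ := μ[·|{y ≠ l_p}] be the conditional probability measures. Let T₁, T₂ : X → X be measurable maps. Let h, f : X → ℝ^m be measurable with values in [0,1]^m, with ∑_{i ∈ Fin m} h(x)_i = 1 for every x, and let sel : X → Fin m be a measurable selector with h(x)_i ≤ h(x)_{sel(x)} for all x and i. Let ε, τ, Q ≥ 0 and λ ≥ 1 be reals. Assume: (i) ∫ f(T₂ x)_{l_p} dμ₁(x,y) ≤ ε; (ii) for every measurable A ⊆ X, μ₀{(x,y) : T₁ x ∈ A} ≤ λ · μ₁{(x,y) : T₁ x ∈ A}; (iii) ∫ |(h(T₁ x)_{l_p} − f(T₁ x)_{l_p}) − (h(T₂ x)_{l_p} − f(T₂ x)_{l_p})| dμ(x,y) ≤ τ; (iv) ∫ (1 − h(T₂ x)_{l_p}) dμ₁(x,y) ≤ Q. Then μ{(x,y)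 : sel(T₂ x) ≠ l_p} ≤ 2·(λ·(Q + τ/η + ε) + τ + (λ − 1)·η), where the measure on the left is taken as a real number. -/
open MeasureTheory ProbabilityTheory
open scoped BigOperators

/-!
If `sel (T₂ x) ≠ l_p`, the target coordinate of the probability vector `h (T₂ x)` is dominated by
another one, so it is at most `1/2`; Markov's inequality bounds the poison error by twice the
expected deficit `1 - h (T₂ x) l_p`. On the target class this deficit is at most `Q`. Off the
target class, with `G = 1 - (h - f) l_p`, the deficit is at most `G (T₂ x)`, which differs from
`G (T₁ x)` by the shortcut discrepancy of (iii); the domination (ii) moves `G (T₁ x)` to the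
target class, where going back from `T₁` to `T₂` bounds its mean by `Q + ε + τ / η`.
-/

theorem le_half_of_le_of_sum_eq_one {ι : Type*} [Fintype ι] {v : ι → ℝ} (hv : ∀ k, 0 ≤ v k)
    (hsum : ∑ k, v k = 1) {i j : ι} (hij : i ≠ j) (hle : v i ≤ v j) : v i ≤ 1 / 2 := by
  classical
  have : v i + v j ≤ 1 := by
    rw [← hsum, ← Finset.sum_pair hij]
    exact Finset.sum_le_sum_of_subset_of_nonneg (Finset.subset_univ _) fun k _ _ => hv k
  linarith

section

variable {Ω : Type*} [MeasurableSpace Ω]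

theorem measureReal_argmax_ne_le_two_mul_integral {ι : Type*} [Fintype ι] {μ : Measure Ω}
    [IsFiniteMeasure μ] {v : Ω → ι → ℝ} {s : Ω → ι} {i : ι} (hv : Measurable fun ω => v ω i)
    (hv0 : ∀ ω k, 0 ≤ v ω k) (hv1 : ∀ ω, ∑ k, v ω k = 1) (hs : ∀ ω k, v ω k ≤ v ω (s ω)) :
    μ.real {ω | s ω ≠ i} ≤ 2 * ∫ ω, (1 - v ω i) ∂μ := by
  have hvi_le : ∀ ω, v ω i ≤ 1 := fun ω =>
    (hv1 ω).symm ▸ Finset.single_le_sum (fun k _ => hv0 ω k) (Finset.mem_univ i)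
  have hsub : {ω | s ω ≠ i} ⊆ {ω | 1 / 2 ≤ 1 - v ω i} := fun ω hω => by
    have := le_half_of_le_of_sum_eq_one (hv0 ω) (hv1 ω) (Ne.symm hω) (hs ω i)
    change 1 / 2 ≤ 1 - v ω i
    linarith
  have hint : Integrable (fun ω => 1 - v ω i) μ :=
    .of_mem_Icc 0 1 (measurable_const.sub hv).aemeasurable (ae_of_all _ fun ω =>
      ⟨sub_nonneg.mpr (hvi_le ω), by linarith [hv0 ω i]⟩)
  have markov := mul_meas_ge_le_integral_of_nonneg
    (ae_of_all _ fun ω => sub_nonneg.mpr (hvi_le ω)) hint (1 / 2)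
  linarith [measureReal_mono hsub (μ := μ)]

theorem MeasureTheory.Measure.le_smul_of_real_le {κ₀ κ₁ : Measure Ω} [IsFiniteMeasure κ₀]
    [IsFiniteMeasure κ₁] {c : ℝ} (hc : 0 ≤ c)
    (h : ∀ s, MeasurableSet s → κ₀.real s ≤ c * κ₁.real s) :
    κ₀ ≤ ENNReal.ofReal c • κ₁ := by
  refine Measure.le_iff.mpr fun s hs => ?_
  rw [Measure.smul_apply, smul_eq_mul, ← ofReal_measureReal (μ := κ₀),
    ← ofReal_measureReal (μ := κ₁), ← ENNReal.ofReal_mul hc]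
  exact ENNReal.ofReal_le_ofReal (h s hs)

theorem integral_le_mul_integral_of_le_smul {ν₀ ν₁ : Measure Ω} {c : ℝ} (hc : 0 ≤ c)
    (hle : ν₀ ≤ ENNReal.ofReal c • ν₁) {g : Ω → ℝ} (hg0 : 0 ≤ᵐ[ν₁] g) (hg : Integrable g ν₁) :
    ∫ ω, g ω ∂ν₀ ≤ c * ∫ ω, g ω ∂ν₁ :=
  calc ∫ ω, g ω ∂ν₀ ≤ ∫ ω, g ω ∂(ENNReal.ofReal c • ν₁) :=
        integral_mono_measure hle (Measure.ae_smul_measure hg0 _)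
          (hg.smul_measure ENNReal.ofReal_ne_top)
    _ = c * ∫ ω, g ω ∂ν₁ := by rw [integral_smul_measure, ENNReal.toReal_ofReal hc, smul_eq_mul]

theorem integral_comp_le_mul_integral_comp {β : Type*} [MeasurableSpace β] {ν₀ ν₁ : Measure Ω}
    [IsFiniteMeasure ν₀] [IsFiniteMeasure ν₁] {T : Ω → β} (hT : Measurable T) {c : ℝ}
    (hc : 0 ≤ c) (hdom : ∀ s, MeasurableSet s → ν₀.real (T ⁻¹' s) ≤ c * ν₁.real (T ⁻¹' s))
    {g : β → ℝ} (hg : Measurable g) (hg0 : ∀ y, 0 ≤ g y)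
    (hgi : Integrable (fun ω => g (T ω)) ν₁) :
    ∫ ω, g (T ω) ∂ν₀ ≤ c * ∫ ω, g (T ω) ∂ν₁ := by
  have hle : ν₀.map T ≤ ENNReal.ofReal c • ν₁.map T :=
    Measure.le_smul_of_real_le hc fun s hs => by
      simpa only [map_measureReal_apply hT hs] using hdom s hs
  rw [← integral_map hT.aemeasurable hg.aestronglyMeasurable,
    ← integral_map hT.aemeasurable hg.aestronglyMeasurable]
  exact integral_le_mul_integral_of_le_smul hc hle (ae_of_all _ hg0)
    ((integrable_map_measure hg.aestronglyMeasurable hT.aemeasurable).mpr hgi)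

theorem measureReal_mul_integral_cond {μ : Measure Ω} [IsFiniteMeasure μ] (s : Set Ω)
    (φ : Ω → ℝ) : μ.real s * ∫ ω, φ ω ∂μ[|s] = ∫ ω in s, φ ω ∂μ := by
  by_cases hs : μ s = 0
  · simp [Measure.real, hs, Measure.restrict_eq_zero.mpr hs]
  · rw [ProbabilityTheory.cond, integral_smul_measure, smul_eq_mul, ENNReal.toReal_inv,
      ← mul_assoc, ← Measure.real, mul_inv_cancel₀ ((measureReal_ne_zero_iff).mpr hs), one_mul]

theorem integral_le_of_cond_integral_le_of_dominated {μ : Measure Ω} [IsProbabilityMeasure μ]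
    {A : Set Ω} (hA : MeasurableSet A) (hA0 : 0 < μ.real A) {F e G D : Ω → ℝ} (hF : Integrable F μ)
    (he : Integrable e μ) (hG : Integrable G μ) (hD : Integrable D μ) (hF0 : ∀ ω, 0 ≤ F ω)
    (he0 : ∀ ω, 0 ≤ e ω) (hGD : ∀ ω, |G ω - (F ω + e ω)| ≤ D ω) {ε τ Q c : ℝ} (hc : 1 ≤ c)
    (he_le : ∫ ω, e ω ∂μ[|A] ≤ ε) (hD_le : ∫ ω, D ω ∂μ ≤ τ) (hF_le : ∫ ω, F ω ∂μ[|A] ≤ Q)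
    (hdom : ∫ ω, G ω ∂μ[|Aᶜ] ≤ c * ∫ ω, G ω ∂μ[|A]) :
    ∫ ω, F ω ∂μ ≤ c * (Q + τ / μ.real A + ε) + τ + (c - 1) * μ.real A := by
  set η := μ.real A
  have hAc : μ.real Aᶜ = 1 - η := probReal_compl_eq_one_sub hA
  have hη1 : 0 ≤ 1 - η := hAc ▸ measureReal_nonneg
  have hD0 : ∀ ω, 0 ≤ D ω := fun ω => (abs_nonneg _).trans (hGD ω)
  have hQ : 0 ≤ Q := (integral_nonneg hF0).trans hF_le
  have hε : 0 ≤ ε := (integral_nonneg he0).trans he_le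
  have hτ : 0 ≤ τ := (integral_nonneg hD0).trans hD_le
  have hDA : 0 ≤ ∫ ω in A, D ω ∂μ := setIntegral_nonneg hA fun ω _ => hD0 ω
  have hDAc : 0 ≤ ∫ ω in Aᶜ, D ω ∂μ := setIntegral_nonneg hA.compl fun ω _ => hD0 ω
  have hD_split := integral_add_compl hA hD
  have hFA : ∫ ω in A, F ω ∂μ ≤ η * Q := by
    rw [← measureReal_mul_integral_cond]; gcongr
  have heA : ∫ ω in A, e ω ∂μ ≤ η * ε := by
    rw [← measureReal_mul_integral_cond]; gcongr
  set a := ∫ ω, G ω ∂μ[|A]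
  have hGA : η * a ≤ ∫ ω in A, F ω ∂μ + ∫ ω in A, e ω ∂μ + ∫ ω in A, D ω ∂μ := by
    calc η * a = ∫ ω in A, G ω ∂μ := measureReal_mul_integral_cond A G
      _ ≤ ∫ ω in A, (F ω + e ω + D ω) ∂μ :=
        setIntegral_mono hG.integrableOn ((hF.add he).add hD).integrableOn fun ω =>
          by linarith [(abs_le.mp (hGD ω)).2]
      _ = _ := by
        rw [integral_add (f := fun ω => F ω + e ω) (hF.add he).integrableOn hD.integrableOn,
          integral_add hF.integrableOn he.integrableOn]
  have ha : a ≤ Q + ε + τ / η := by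
    refine le_of_mul_le_mul_left ?_ hA0
    rw [mul_add, mul_div_cancel₀ _ hA0.ne']
    linarith
  have hGAc : ∫ ω in Aᶜ, G ω ∂μ ≤ (1 - η) * (c * a) := by
    rw [← measureReal_mul_integral_cond, hAc]; exact mul_le_mul_of_nonneg_left hdom hη1
  have hFAc : ∫ ω in Aᶜ, F ω ∂μ ≤ ∫ ω in Aᶜ, G ω ∂μ + ∫ ω in Aᶜ, D ω ∂μ := by
    rw [← integral_add hG.integrableOn hD.integrableOn]
    exact setIntegral_mono hF.integrableOn (hG.add hD).integrableOn fun ω =>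
      by linarith [(abs_le.mp (hGD ω)).1, he0 ω]
  have hca : (1 - η) * (c * a) ≤ (1 - η) * (c * (Q + ε + τ / η)) := by gcongr
  have hX : Q ≤ Q + ε + τ / η := by have := div_nonneg hτ hA0.le; linarith
  rw [← integral_add_compl hA hF]
  linarith [mul_le_mul_of_nonneg_left (mul_le_mul hc hX hQ (by linarith)) hA0.le,
    mul_nonneg (sub_nonneg.mpr hc) hA0.le]

end

theorem poison_population_error_bound_general
    {X : Type*} [MeasurableSpace X] {m : ℕ}
    (μ : Measure (X × Fin m)) [IsProbabilityMeasure μ] (l_p : Fin m)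
    (η : ℝ) (hη : η = (μ {p | p.2 = l_p}).toReal) (hη0 : 0 < η)
    (T₁ T₂ : X → X) (hT₁ : Measurable T₁) (hT₂ : Measurable T₂)
    (h f : X → Fin m → ℝ) (hhm : Measurable h) (hfm : Measurable f)
    (hh01 : ∀ x i, h x i ∈ Set.Icc (0 : ℝ) 1) (hf01 : ∀ x i, f x i ∈ Set.Icc (0 : ℝ) 1)
    (hsum : ∀ x, ∑ i, h x i = 1)
    (sel : X → Fin m) (hmax : ∀ x i, h x i ≤ h x (sel x))
    (ε τ Q lam : ℝ) (hlam : 1 ≤ lam)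
    -- (i) the trigger is adversarial for `f` on the target class
    (hyp1 : ∫ p, f (T₂ p.1) l_p ∂(μ[|{p | p.2 = l_p}]) ≤ ε)
    -- (ii) λ-domination of the trigger distribution
    (hyp2 : ∀ A : Set X, MeasurableSet A →
      ((μ[|{p | p.2 ≠ l_p}]) {p | T₁ p.1 ∈ A}).toReal ≤
        lam * ((μ[|{p | p.2 = l_p}]) {p | T₁ p.1 ∈ A}).toReal)
    -- (iii) shortcut-similarity condition for the backdoor part `h − f`
    (hyp3 : ∫ p, |(h (T₁ p.1) l_p - f (T₁ p.1) l_p) -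
        (h (T₂ p.1) l_p - f (T₂ p.1) l_p)| ∂μ ≤ τ)
    -- (iv) confidence-deficit bound on triggered target-class inputs
    (hyp4 : ∫ p, (1 - h (T₂ p.1) l_p) ∂(μ[|{p | p.2 = l_p}]) ≤ Q) :
    (μ {p | sel (T₂ p.1) ≠ l_p}).toReal ≤
      2 * (lam * (Q + τ / η + ε) + τ + (lam - 1) * η) := by
  subst hη
  set A : Set (X × Fin m) := {p | p.2 = l_p}
  have hA : MeasurableSet A := measurable_snd (measurableSet_singleton l_p)
  have hcoord {k : X → Fin m → ℝ} (hk : Measurable k) (hk01 : ∀ x i, k x i ∈ Set.Icc (0 : ℝ) 1)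
      {T : X → X} (hT : Measurable T) (ν : Measure (X × Fin m)) [IsFiniteMeasure ν] :
      Integrable (fun p => k (T p.1) l_p) ν :=
    .of_mem_Icc 0 1 (by fun_prop) (ae_of_all _ fun p => hk01 _ l_p)
  let G : X → ℝ := fun x => 1 - (h x l_p - f x l_p)
  have hGint (ν : Measure (X × Fin m)) [IsFiniteMeasure ν] : Integrable (fun p => G (T₁ p.1)) ν :=
    (integrable_const 1).sub ((hcoord hhm hh01 hT₁ ν).sub (hcoord hfm hf01 hT₁ ν))
  have hdom : ∫ p, G (T₁ p.1) ∂μ[|Aᶜ] ≤ lam * ∫ p, G (T₁ p.1) ∂μ[|A] :=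
    integral_comp_le_mul_integral_comp (by fun_prop) (by linarith) hyp2 (by fun_prop)
      (fun x => by linarith [(hh01 x l_p).2, (hf01 x l_p).1]) (hGint _)
  have hdeficit := integral_le_of_cond_integral_le_of_dominated hA hη0
    (F := fun p => 1 - h (T₂ p.1) l_p) (e := fun p => f (T₂ p.1) l_p) (G := fun p => G (T₁ p.1))
    (D := fun p => |(h (T₁ p.1) l_p - f (T₁ p.1) l_p) - (h (T₂ p.1) l_p - f (T₂ p.1) l_p)|)
    ((integrable_const 1).sub (hcoord hhm hh01 hT₂ μ)) (hcoord hfm hf01 hT₂ μ) (hGint μ)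
    (((hcoord hhm hh01 hT₁ μ).sub (hcoord hfm hf01 hT₁ μ)).sub
      ((hcoord hhm hh01 hT₂ μ).sub (hcoord hfm hf01 hT₂ μ))).abs
    (fun p => sub_nonneg.mpr (hh01 _ l_p).2) (fun p => (hf01 _ l_p).1)
    (fun p => by rw [← abs_neg]; exact le_of_eq (congrArg abs (by ring))) hlam hyp1 hyp3 hyp4 hdom
  calc (μ {p | sel (T₂ p.1) ≠ l_p}).toReal ≤ 2 * ∫ p, (1 - h (T₂ p.1) l_p) ∂μ :=
        measureReal_argmax_ne_le_two_mul_integral (μ := μ) (v := fun p => h (T₂ p.1))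
          (s := fun p => sel (T₂ p.1)) (by fun_prop)
          (fun p i => (hh01 _ i).1) (fun p => hsum _) (fun p => hmax _)
    _ ≤ _ := by gcongr; exact hdeficit

/-- Deterministic core of the poison generalization error bound: under conditions
(i)–(iv) — the trigger `T₁` is adversarial for the clean network `f` on the target class,
the trigger distribution off the target class is `λ`-dominated by that on the target
class, the backdoor part `h − f` behaves similarly on `T₁ x` and `T₂ x`, and the expected
target-class confidence deficit of `h` on triggered target-class inputs is at most `Q` —
the poison population error `μ{sel(T₂ x) ≠ l_p}` is bounded by
`2(λ(Q + τ/η + ε) + τ + (λ−1)η)`. -/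
theorem poison_population_error_bound
    {X : Type*} [MeasurableSpace X] {m : ℕ} (hm : 1 ≤ m)
    (μ : Measure (X × Fin m)) [IsProbabilityMeasure μ] (l_p : Fin m)
    (η : ℝ) (hη : η = (μ {p | p.2 = l_p}).toReal) (hη0 : 0 < η) (hη1 : η < 1)
    (T₁ T₂ : X → X) (hT₁ : Measurable T₁) (hT₂ : Measurable T₂)
    (h f : X → Fin m → ℝ) (hhm : Measurable h) (hfm : Measurable f)
    (hh01 : ∀ x i, h x i ∈ Set.Icc (0 : ℝ) 1) (hf01 : ∀ x i, f x i ∈ Set.Icc (0 : ℝ) 1)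
    (hsum : ∀ x, ∑ i, h x i = 1)
    (sel : X → Fin m) (hsel : Measurable sel) (hmax : ∀ x i, h x i ≤ h x (sel x))
    (ε τ Q lam : ℝ) (hε : 0 ≤ ε) (hτ : 0 ≤ τ) (hQ : 0 ≤ Q) (hlam : 1 ≤ lam)
    -- (i) the trigger is adversarial for `f` on the target class
    (hyp1 : ∫ p, f (T₂ p.1) l_p ∂(μ[|{p | p.2 = l_p}]) ≤ ε)
    -- (ii) λ-domination of the trigger distribution
    (hyp2 : ∀ A : Set X, MeasurableSet A →
      ((μ[|{p | p.2 ≠ l_p}]) {p | T₁ p.1 ∈ A}).toReal ≤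
        lam * ((μ[|{p | p.2 = l_p}]) {p | T₁ p.1 ∈ A}).toReal)
    -- (iii) shortcut-similarity condition for the backdoor part `h − f`
    (hyp3 : ∫ p, |(h (T₁ p.1) l_p - f (T₁ p.1) l_p) -
        (h (T₂ p.1) l_p - f (T₂ p.1) l_p)| ∂μ ≤ τ)
    -- (iv) confidence-deficit bound on triggered target-class inputs
    (hyp4 : ∫ p, (1 - h (T₂ p.1) l_p) ∂(μ[|{p | p.2 = l_p}]) ≤ Q) :
    (μ {p | sel (T₂ p.1) ≠ l_p}).toReal ≤
      2 * (lam * (Q + τ / η + ε) + τ + (lam - 1) * η) :=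
  poison_population_error_bound_general μ l_p η hη hη0 T₁ T₂ hT₁ hT₂ h f hhm hfm hh01 hf01 hsum sel
    hmax ε τ Q lam hlam hyp1 hyp2 hyp3 hyp4
end

section
/- Let n, m ≥ 1, l_p ∈ Fin m, and let ε, L, c, k be reals with 0 < ε < 1/4, L ≥ 0, 0 ≤ c ≤ 1, k ≥ 0, satisfying 2ε ≤ c(1 − 4ε) − (c + 4L)·k ≤ 1 − 2ε. Let T_c and T_p be finite subsets of ℝⁿ × Fin m such that every element of T_p has label l_p, and set S₀ := {x : (x, l_p) ∈ T_p} and S₁ := {x : ∃ y, (x, y) ∈ T_c}. Let P : ℝⁿ → ℝⁿ satisfy ‖P x₁ − P x₂‖ ≤ k for all x₁, x₂ ∈ ℝⁿ. Let h, f : ℝⁿ × Fin m → ℝ take values in [0,1], satisfy h(x, y₁) + h(x, y₂) ≥ 1 and f(x, y₁) + f(x, y₂) ≥ 1 for all x ∈ ℝⁿ and all y₁ ≠ y₂ in Fin m, and be such that x ↦ h(x, y) and x ↦ f(x, y) are L-Lipschitz for every y. Define g(z) := f(z, l_p) − h(z, l_p). Assume: (a) h(x, y) < ε for every (x, y) ∈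 T_c, and h(x + P x, l_p) < ε for every (x, l_p) ∈ T_p; (b) f(x, y) < ε for every (x, y) ∈ T_c ∪ T_p; (c) f(x + P x, y) > 1 − ε for every (x, y) ∈ T_c ∪ T_p; (d) the pair (S₀, S₁) is not linearly separable, and P is a binary shortcut with bound 2ε of (S₀, S₁); (e) the singleton set {g} is a simple-feature-recognition space with constant c. Then |g(P x) − g(x + P x)| ≤ 1 − c(1 − 4ε) + (c + 4L)·k for every (x, l_p) ∈ T_p, and |g(P x) − g(x + P x)| ≤ 1 + 2ε − c(1 − 4ε) + (c + 4L)·k for every (x, y) ∈ T_c. -/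
open scoped RealInnerProductSpace

/-- `P` is a binary shortcut with bound `η₁` of `(S₀, S₁)`: some unit-normal affine
function separates the poisoned class-0 points from the class-1 points with margin
`η₁`. -/
def BinaryShortcut {n : ℕ} (P : EuclideanSpace ℝ (Fin n) → EuclideanSpace ℝ (Fin n))
    (η₁ : ℝ) (S₀ S₁ : Set (EuclideanSpace ℝ (Fin n))) : Prop :=
  ∃ (w : EuclideanSpace ℝ (Fin n)) (b : ℝ), ‖w‖ = 1 ∧
    (∀ x ∈ S₀, 1 - η₁ ≤ ⟪w, x + P x⟫ + b) ∧ (∀ x ∈ S₁, ⟪w, x⟫ + b ≤ η₁)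

/-- A set `G` of functions `ℝⁿ → ℝ` is a simple-feature-recognition space with constant
`c`: whenever `(S₀, S₁)` is a finite linearly-inseparable pair, `P` is a binary shortcut
with bound `η₁ ∈ (0, 1/2)` whose values on `S₀` are `k`-similar, and `g ∈ G` separates
the poisoned data with margin `η₁`, then `g` assigns value at least `c(1 − 2η₁ − k)` to
the triggers `P x₀` and adding a trigger raises `g` by at least `c(1 − 2η₁ − k)`. -/
def SimpleFeatureRecog {n : ℕ} (G : Set (EuclideanSpace ℝ (Fin n) → ℝ)) (c : ℝ) : Prop :=
  ∀ S₀ S₁ : Set (EuclideanSpace ℝ (Fin n)), S₀.Finite → S₁.Finite →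
    ¬ LinSeparable S₀ S₁ →
  ∀ η₁ : ℝ, 0 < η₁ → η₁ < 1 / 2 →
  ∀ P : EuclideanSpace ℝ (Fin n) → EuclideanSpace ℝ (Fin n),
    BinaryShortcut P η₁ S₀ S₁ →
  ∀ k : ℝ, (∀ x ∈ S₀, ∀ z ∈ S₀, ‖P x - P z‖ ≤ k) →
  ∀ g ∈ G, (∀ x ∈ S₀, 1 - η₁ ≤ g (x + P x)) → (∀ x ∈ S₁, g x ≤ η₁) →
  ∀ x₀ ∈ S₀, c * (1 - 2 * η₁ - k) ≤ g (P x₀) ∧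
    ∀ x₁ ∈ S₀ ∪ S₁, c * (1 - 2 * η₁ - k) ≤ g (x₁ + P x₀) - g x₁

/-- Key deterministic step (Result one) showing that shortcut triggers make condition
(c3) of the poison generalization bound hold with a small `τ`: the backdoor part
`g = f(·, l_p) − h(·, l_p)` takes similar values on `P x` and `x + P x` on every training
point. -/
theorem shortcut_trigger_backdoor_similarity
    {n m : ℕ} (hn : 1 ≤ n) (hm : 1 ≤ m) (l_p : Fin m)
    (ε L c k : ℝ) (hε0 : 0 < ε) (hε1 : ε < 1 / 4) (hL : 0 ≤ L)
    (hc0 : 0 ≤ c) (hc1 : c ≤ 1) (hk0 : 0 ≤ k)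
    (hlow : 2 * ε ≤ c * (1 - 4 * ε) - (c + 4 * L) * k)
    (hhigh : c * (1 - 4 * ε) - (c + 4 * L) * k ≤ 1 - 2 * ε)
    (T_c T_p : Set (EuclideanSpace ℝ (Fin n) × Fin m))
    (hTc : T_c.Finite) (hTp : T_p.Finite)
    (hTp_label : ∀ p ∈ T_p, p.2 = l_p)
    (S₀ S₁ : Set (EuclideanSpace ℝ (Fin n)))
    (hS₀ : S₀ = {x | (x, l_p) ∈ T_p}) (hS₁ : S₁ = {x | ∃ y, (x, y) ∈ T_c})
    (P : EuclideanSpace ℝ (Fin n) → EuclideanSpace ℝ (Fin n))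
    (hPk : ∀ x₁ x₂ : EuclideanSpace ℝ (Fin n), ‖P x₁ - P x₂‖ ≤ k)
    (h f : EuclideanSpace ℝ (Fin n) × Fin m → ℝ)
    (hh01 : ∀ p, h p ∈ Set.Icc (0 : ℝ) 1) (hf01 : ∀ p, f p ∈ Set.Icc (0 : ℝ) 1)
    (hhsum : ∀ x, ∀ y₁ y₂ : Fin m, y₁ ≠ y₂ → 1 ≤ h (x, y₁) + h (x, y₂))
    (hfsum : ∀ x, ∀ y₁ y₂ : Fin m, y₁ ≠ y₂ → 1 ≤ f (x, y₁) + f (x, y₂))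
    (hhLip : ∀ y : Fin m, ∀ x₁ x₂, |h (x₁, y) - h (x₂, y)| ≤ L * ‖x₁ - x₂‖)
    (hfLip : ∀ y : Fin m, ∀ x₁ x₂, |f (x₁, y) - f (x₂, y)| ≤ L * ‖x₁ - x₂‖)
    (g : EuclideanSpace ℝ (Fin n) → ℝ) (hg : ∀ z, g z = f (z, l_p) - h (z, l_p))
    -- (a) `h` fits the poisoned training set well
    (ha1 : ∀ p ∈ T_c, h p < ε) (ha2 : ∀ x, (x, l_p) ∈ T_p → h (x + P x, l_p) < ε)
    -- (b) `f` fits the clean training set well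
    (hb : ∀ p ∈ T_c ∪ T_p, f p < ε)
    -- (c) the trigger is adversarial for `f`
    (hc : ∀ p ∈ T_c ∪ T_p, 1 - ε < f (p.1 + P p.1, p.2))
    -- (d) `(S₀, S₁)` is not linearly separable and `P` is a binary shortcut of it
    (hd1 : ¬ LinSeparable S₀ S₁) (hd2 : BinaryShortcut P (2 * ε) S₀ S₁)
    -- (e) `{g}` is a simple-feature-recognition space with constant `c`
    (he : SimpleFeatureRecog {g} c) :
    (∀ x, (x, l_p) ∈ T_p →
      |g (P x) - g (x + P x)| ≤ 1 - c * (1 - 4 * ε) + (c + 4 * L) * k) ∧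
    (∀ p ∈ T_c,
      |g (P p.1) - g (p.1 + P p.1)| ≤ 1 + 2 * ε - c * (1 - 4 * ε) + (c + 4 * L) * k) := by
    classical
  -- finiteness of S₀, S₁
  have hS₀fin : S₀.Finite := by
    apply (hTp.image Prod.fst).subset
    intro x hx
    rw [hS₀] at hx
    exact ⟨(x, l_p), hx, rfl⟩
  have hS₁fin : S₁.Finite := by
    apply (hTc.image Prod.fst).subset
    intro x hx
    rw [hS₁] at hx
    obtain ⟨y, hy⟩ := hx
    exact ⟨(x, y), hy, rfl⟩
  -- S₀ is nonempty (otherwise (S₀,S₁) would be linearly separable)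
  have hS₀ne : S₀.Nonempty := by
    by_contra hne
    rw [Set.not_nonempty_iff_eq_empty] at hne
    refine hd1 ⟨0, 0, ?_, ?_⟩
    · intro x hx; rw [hne] at hx; exact absurd hx (Set.notMem_empty x)
    · intro x hx; simp [inner_zero_left]
  obtain ⟨x₀, hx₀⟩ := hS₀ne
  -- bounds on g
  have hg_le : ∀ z, g z ≤ 1 := by
    intro z
    have h1 := (hf01 (z, l_p)).2
    have h2 := (hh01 (z, l_p)).1
    rw [hg]; linarith
  -- g is 2L-Lipschitz
  have hgLip : ∀ a b, |g a - g b| ≤ 2 * L * ‖a - b‖ := by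
    intro a b
    have h1 := abs_le.mp (hfLip l_p a b)
    have h2 := abs_le.mp (hhLip l_p a b)
    rw [hg, hg, abs_le]
    constructor <;> linarith [h1.1, h1.2, h2.1, h2.2]
  -- margin conditions for the simple-feature-recognition hypothesis
  have hmargin0 : ∀ x ∈ S₀, 1 - 2 * ε ≤ g (x + P x) := by
    intro x hx
    rw [hS₀] at hx
    have h1 := hc (x, l_p) (Or.inr hx)
    have h2 := ha2 x hx
    rw [hg]; simp only at h1; linarith
  have hmargin1 : ∀ x ∈ S₁, g x ≤ 2 * ε := by
    intro x hx
    rw [hS₁] at hx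
    obtain ⟨y, hy⟩ := hx
    by_cases hyl : y = l_p
    · subst hyl
      have h1 := hb (x, y) (Or.inl hy)
      have h2 := (hh01 (x, y)).1
      rw [hg]; linarith
    · have h1 := ha1 (x, y) hy
      have h2 := hhsum x y l_p hyl
      have h3 := (hf01 (x, l_p)).2
      rw [hg]; linarith
  -- lower bound of g on S₁
  have hgS₁lb : ∀ x ∈ S₁, -ε ≤ g x := by
    intro x hx
    rw [hS₁] at hx
    obtain ⟨y, hy⟩ := hx
    by_cases hyl : y = l_p
    · subst hyl
      have h1 := ha1 (x, y) hy
      have h2 := (hf01 (x, y)).1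
      rw [hg]; linarith
    · have h1 := hb (x, y) (Or.inl hy)
      have h2 := hfsum x y l_p hyl
      have h3 := (hh01 (x, l_p)).2
      rw [hg]; linarith
  -- apply the simple-feature-recognition hypothesis
  have hη0 : 0 < 2 * ε := by linarith
  have hη1 : 2 * ε < 1 / 2 := by linarith
  have hkey := he S₀ S₁ hS₀fin hS₁fin hd1 (2 * ε) hη0 hη1 P hd2 k
    (fun x _ z _ => hPk x z) g rfl hmargin0 hmargin1
  have hck : 0 ≤ c * k := mul_nonneg hc0 hk0
  have hLk : 0 ≤ L * k := mul_nonneg hL hk0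
  constructor
  · -- the poisoned points
    intro x hx
    have hxS₀ : x ∈ S₀ := by rw [hS₀]; exact hx
    have h1 := (hkey x hxS₀).1
    have h2 := hg_le (P x)
    have h3 := hmargin0 x hxS₀
    have h4 := hg_le (x + P x)
    rw [abs_le]
    constructor <;> linarith
  · -- the clean points
    rintro ⟨x, y⟩ hp
    simp only
    have hxS₁ : x ∈ S₁ := by rw [hS₁]; exact ⟨y, hp⟩
    have h1 := (hkey x₀ hx₀).1
    have h2 := (hkey x₀ hx₀).2 x (Or.inr hxS₁)
    -- Lipschitz transfers from P x₀ to P x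
    have hnorm1 : ‖P x - P x₀‖ ≤ k := hPk x x₀
    have hL1 : |g (P x) - g (P x₀)| ≤ 2 * L * k := by
      refine le_trans (hgLip (P x) (P x₀)) ?_
      have : (0:ℝ) ≤ 2 * L := by linarith
      nlinarith [hgLip (P x) (P x₀)]
    have hL2 : |g (x + P x) - g (x + P x₀)| ≤ 2 * L * k := by
      have heq : ‖(x + P x) - (x + P x₀)‖ = ‖P x - P x₀‖ := by
        congr 1; abel
      refine le_trans (hgLip (x + P x) (x + P x₀)) ?_
      rw [heq]
      nlinarith
    have hL1' := abs_le.mp hL1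
    have hL2' := abs_le.mp hL2
    have h3 := hgS₁lb x hxS₁
    have h4 := hmargin1 x hxS₁
    have h5 := hg_le (P x)
    have h6 := hg_le (x + P x)
    rw [abs_le]
    constructor <;> linarith [hL1'.1, hL1'.2, hL2'.1, hL2'.2]
end

section
/- Let n, m, K, N be natural numbers with m ≥ 1, 1 ≤ K ≤ N, and let l_p ∈ Fin m. Let h : ℝⁿ × Fin m → ℝ take values in [0,1] and satisfy h(x, y₁) + h(x, y₂) ≥ 1 for all x ∈ ℝⁿ and all y₁ ≠ y₂ in Fin m. Let x : Fin K → ℝⁿ and y : Fin K → Fin m with y(i) ≠ l_p for every i, and let v : Fin K → ℝ with v(i) ∈ {−1, 1} for every i. Let D : Fin N → ℝⁿ × Fin m and let ι : Fin K → Fin N be injective with D(ι(i)) = (x(i), y(i)) whenever v(i) = −1 and D(ι(i)) = (x(i), l_p) whenever v(i) = 1. If (1/N) · ∑_{j ∈ Fin N} h(D(j)) ≤ ε for a real ε, then ∑_{i ∈ Fin K} v(i) · h(x(i), y(i)) ≥ #{i : v(i) = 1} − N·ε. -/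
open scoped BigOperators

/-- Deterministic Result one in the proof that successful poisoning forces a large
Rademacher complexity: if the poisoned training set `D` of size `N` contains the points
`(x i, y i)` at the positions of sign `−1` and the clean-label poisoned points
`(x i, l_p)` at the positions of sign `+1`, and the empirical risk of `h` on `D` is at
most `ε`, then the Rademacher-type signed sum `∑ v i · h (x i, y i)` is at least the
number of positive signs minus `N·ε`. -/
theorem signed_sum_lower_bound
    {n m K N : ℕ} (hm : 1 ≤ m) (hK : 1 ≤ K) (hKN : K ≤ N) (l_p : Fin m)
    (h : EuclideanSpace ℝ (Fin n) × Fin m → ℝ)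
    (hh01 : ∀ p, h p ∈ Set.Icc (0 : ℝ) 1)
    (hhsum : ∀ x : EuclideanSpace ℝ (Fin n), ∀ y₁ y₂ : Fin m, y₁ ≠ y₂ →
      1 ≤ h (x, y₁) + h (x, y₂))
    (x : Fin K → EuclideanSpace ℝ (Fin n)) (y : Fin K → Fin m)
    (hy : ∀ i, y i ≠ l_p)
    (v : Fin K → ℝ) (hv : ∀ i, v i = -1 ∨ v i = 1)
    (D : Fin N → EuclideanSpace ℝ (Fin n) × Fin m)
    (ι : Fin K → Fin N) (hι : Function.Injective ι)
    (hD1 : ∀ i, v i = -1 → D (ι i) = (x i, y i))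
    (hD2 : ∀ i, v i = 1 → D (ι i) = (x i, l_p))
    (ε : ℝ) (hε : (1 / (N : ℝ)) * ∑ j, h (D j) ≤ ε) :
    ((Finset.univ.filter fun i => v i = 1).card : ℝ) - N * ε ≤
      ∑ i, v i * h (x i, y i) := by
  have hN : (0 : ℝ) < N := by
    have : 0 < N := lt_of_lt_of_le hK hKN
    exact_mod_cast this
  have hs : ∑ j, h (D j) ≤ N * ε := by
    rw [one_div, inv_mul_le_iff₀ hN] at hε
    linarith
  have himg : ∑ i, h (D (ι i)) ≤ ∑ j, h (D j) := by
    have e : ∑ j ∈ Finset.univ.image ι, h (D j) = ∑ i, h (D (ι i)) :=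
      Finset.sum_image (fun a _ b _ hab => hι hab)
    rw [← e]
    refine Finset.sum_le_sum_of_subset_of_nonneg (Finset.subset_univ _) ?_
    intro j _ _
    exact (hh01 (D j)).1
  have hpt : ∀ i, (if v i = 1 then (1 : ℝ) else 0) - h (D (ι i)) ≤
      v i * h (x i, y i) := by
    intro i
    rcases hv i with h1 | h1
    · have : v i ≠ 1 := by rw [h1]; norm_num
      rw [if_neg this, hD1 i h1, h1]
      exact le_of_eq (by ring)
    · rw [if_pos h1, hD2 i h1, h1, one_mul]
      have := hhsum (x i) (y i) l_p (hy i)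
      linarith
  calc ((Finset.univ.filter fun i => v i = 1).card : ℝ) - N * ε
      ≤ ((Finset.univ.filter fun i => v i = 1).card : ℝ) - ∑ j, h (D j) := by
        linarith
    _ ≤ ((Finset.univ.filter fun i => v i = 1).card : ℝ) - ∑ i, h (D (ι i)) := by
        linarith
    _ = ∑ i, ((if v i = 1 then (1 : ℝ) else 0) - h (D (ι i))) := by
        rw [Finset.sum_sub_distrib, Finset.sum_boole]
    _ ≤ ∑ i, v i * h (x i, y i) := Finset.sum_le_sum (fun i _ => hpt i)
end
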